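/- arXiv:2404.07599 — 6 statements merged into one kernel-verified Lean document; each statement's English description precedes it below -/
import Mathlib

section
/- There exists a linear isometry T from ℓ∞ into ℓ∞ (i.e., ‖T(a)‖_∞ = ‖a‖_∞ for every bounded real sequence a) such that for every nonzero a ∈ ℓ∞ and every n ∈ ℕ, the n-th coordinate of T(a) satisfies |(T a)(n)| < ‖a‖_∞; in other words, no nonzero element of the range of T has'a coordinate of maximum modulus. -/
/-!
Split `ℕ` into countably many copies of itself via `Nat.pair` and put on the `j`-th copy the
sequence `a`, scaled by the weight `j / (j + 1)`. Every coordinate of the image is then a strict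
contraction of a coordinate of `a`, while the supremum over all copies recovers `‖a‖` because the
weights tend to `1`.
-/

open scoped lp ENNReal

namespace WeightedCopies

variable (c : ℕ → ℝ)

lemma norm_mul_apply_le (r : ℝ) (a : ℓ^∞(ℕ, ℝ)) (k : ℕ) : ‖r * a k‖ ≤ ‖r‖ * ‖a‖ := by
  rw [norm_mul]
  gcongr
  exact lp.norm_apply_le_norm ENNReal.top_ne_zero a k

lemma memℓp_infty (hc : ∀ j, ‖c j‖ ≤ 1) (a : ℓ^∞(ℕ, ℝ)) :
    Memℓp (fun m : ℕ => c m.unpair.1 * a m.unpair.2) ∞ :=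
  memℓp_infty_iff.mpr ⟨‖a‖, Set.forall_mem_range.mpr fun _ =>
    (norm_mul_apply_le _ a _).trans (mul_le_of_le_one_left (norm_nonneg a) (hc _))⟩

noncomputable def map (hc : ∀ j, ‖c j‖ ≤ 1) : ℓ^∞(ℕ, ℝ) →ₗ[ℝ] ℓ^∞(ℕ, ℝ) where
  toFun a := ⟨_, memℓp_infty c hc a⟩
  map_add' a b := by
    ext m
    exact mul_add _ _ _
  map_smul' r a := by
    ext m
    exact mul_left_comm _ _ _

variable {c}

lemma map_apply (hc : ∀ j, ‖c j‖ ≤ 1) (a : ℓ^∞(ℕ, ℝ)) (m : ℕ) :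
    map c hc a m = c m.unpair.1 * a m.unpair.2 :=
  rfl

lemma norm_map_apply_le (hc : ∀ j, ‖c j‖ ≤ 1) (a : ℓ^∞(ℕ, ℝ)) (m : ℕ) :
    ‖map c hc a m‖ ≤ ‖c m.unpair.1‖ * ‖a‖ :=
  norm_mul_apply_le _ a _

lemma norm_map (hc : ∀ j, ‖c j‖ ≤ 1) (hsup : ⨆ j, ‖c j‖ = 1) (a : ℓ^∞(ℕ, ℝ)) :
    ‖map c hc a‖ = ‖a‖ := by
  refine le_antisymm (lp.norm_le_of_forall_le (norm_nonneg a) fun m => ?_)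
    (lp.norm_le_of_forall_le (norm_nonneg _) fun k => ?_)
  · exact (norm_map_apply_le hc a m).trans (mul_le_of_le_one_left (norm_nonneg a) (hc _))
  · have hcopy (j : ℕ) : ‖a k‖ * ‖c j‖ ≤ ‖map c hc a‖ := by
      have := lp.norm_apply_le_norm ENNReal.top_ne_zero (map c hc a) (Nat.pair j k)
      rwa [map_apply, Nat.unpair_pair, norm_mul, mul_comm] at this
    calc ‖a k‖ = ‖a k‖ * ⨆ j, ‖c j‖ := by rw [hsup, mul_one]
      _ = ⨆ j, ‖a k‖ * ‖c j‖ := Real.mul_iSup_of_nonneg (norm_nonneg _) _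
      _ ≤ ‖map c hc a‖ := ciSup_le hcopy

lemma norm_map_apply_lt (hc : ∀ j, ‖c j‖ ≤ 1) (hlt : ∀ j, ‖c j‖ < 1) {a : ℓ^∞(ℕ, ℝ)}
    (ha : a ≠ 0) (m : ℕ) : ‖map c hc a m‖ < ‖a‖ :=
  (norm_map_apply_le hc a m).trans_lt (mul_lt_of_lt_one_left (norm_pos_iff.mpr ha) (hlt _))

end WeightedCopies

lemma norm_natCast_div_succ_lt_one (j : ℕ) : ‖(j : ℝ) / (j + 1)‖ < 1 := by
  rw [Real.norm_of_nonneg (by positivity), div_lt_one (by positivity)]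
  exact lt_add_one _

lemma iSup_norm_natCast_div_succ : ⨆ j : ℕ, ‖(j : ℝ) / (j + 1)‖ = 1 := by
  refine ciSup_eq_of_forall_le_of_forall_lt_exists_gt (fun j => (norm_natCast_div_succ_lt_one j).le)
    fun w hw => ?_
  have hlim := (tendsto_natCast_div_add_atTop (1 : ℝ)).norm
  rw [norm_one] at hlim
  exact (hlim.eventually (lt_mem_nhds hw)).exists

/-- There is a linear isometry `T` from `ℓ∞` into `ℓ∞` such that no nonzero element of the
range of `T` has a coordinate of maximum modulus: `|(T a) n| < ‖a‖` for all `n` whenever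
`a ≠ 0`. -/
theorem linear_isometry_linfty_no_max_coordinate :
    ∃ T : lp (fun _ : ℕ => ℝ) ⊤ →ₗ[ℝ] lp (fun _ : ℕ => ℝ) ⊤,
      (∀ a : lp (fun _ : ℕ => ℝ) ⊤, ‖T a‖ = ‖a‖) ∧
      (∀ a : lp (fun _ : ℕ => ℝ) ⊤, a ≠ 0 → ∀ n : ℕ, |(T a) n| < ‖a‖) := by
  have hc (j : ℕ) := (norm_natCast_div_succ_lt_one j).le
  refine ⟨WeightedCopies.map _ hc, WeightedCopies.norm_map hc iSup_norm_natCast_div_succ,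
    fun a ha n => ?_⟩
  rw [← Real.norm_eq_abs]
  exact WeightedCopies.norm_map_apply_lt hc norm_natCast_div_succ_lt_one ha n
end

section
/- Let M be an infinite pointed metric space containing sequences of points (p_n) and (q_n) with p_n ≠ q_n for all n and d(p_n, p_m) > d(p_n, q_n) + d(p_m, q_m) whenever n ≠ m. Suppose (g_n) ⊆ Lip₀(M) satisfies ‖g_n‖ = 1 and |g_n(p)| ≤ max{0, d(p_n, q_n) − d(p_n, p)} for all n ∈ ℕ and p ∈ M. Then for every nonzero bounded real sequence λ = (λ_n), the function g^(λ) defined pointwise by g^(λ)(p) = Σ_n λ_n g_n(p) (at most one term of the series is nonzero at each point, since the g_n have pairwise disjoint supports) belongs to Lip₀(M) and satisfies ‖g^(λ)‖ = ‖λ‖_∞. Moreover, if no g_n strongly attains its norm, then g^(λ) does not strongly attain its norm. -/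
open Filter Set
open scoped ZeroAtInfty ENNReal NNReal

/-- The optimal Lipschitz constant (Lipschitz norm) of `f : M → ℝ`. -/
noncomputable def lipNorm {M : Type*} [MetricSpace M] (f : M → ℝ) : ℝ :=
  sSup {r : ℝ | ∃ p q : M, p ≠ q ∧ r = |f p - f q| / dist p q}

/-- `f` belongs to `Lip₀(M)`: it is Lipschitz and vanishes at the base point. -/
def MemLip0 {M : Type*} [MetricSpace M] (base : M) (f : M → ℝ) : Prop :=
  f base = 0 ∧ ∃ K : ℝ≥0, LipschitzWith K f

/-- `f` strongly attains its (Lipschitz) norm. -/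
def StronglyAttains {M : Type*} [MetricSpace M] (f : M → ℝ) : Prop :=
  ∃ p q : M, p ≠ q ∧ |f p - f q| = lipNorm f * dist p q

/-- `f` attains its pointwise norm. -/
def PointwiseAttains {M : Type*} [MetricSpace M] (f : M → ℝ) : Prop :=
  ∃ p : M, sSup {r : ℝ | ∃ q : M, q ≠ p ∧ r = |f p - f q| / dist p q} = lipNorm f

/-!
The cone condition `|g_n x| ≤ max 0 (d(p_n, q_n) - d(p_n, x))` and the separation of the `p_n`
give, by the triangle inequality through `p_n` and `p_m`, that `|g_n x| + |g_m y| < d(x, y)` whenever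
`n ≠ m`, `g_n x ≠ 0` and `g_m y ≠ 0`. In particular the supports are disjoint, so the series has at
most one nonzero term at each point, and a difference `G x - G y` of `G = Σ λ_n g_n` is either
`λ_n (g_n x - g_n y)` for a single `n`, or a difference of two terms from different supports, which
is strictly smaller than `‖λ‖_∞ d(x, y)`. This gives `‖G‖ ≤ ‖λ‖_∞`, and it shows that a pair at which
`G` attains its norm is a pair at which some `g_n` attains its norm. Conversely, for any `u, v`,
with `t = |g_n u - g_n v|`, one has `|G u - G v| ≥ |λ_n| t - ‖λ‖_∞ (d(u, v) - t)`, and letting `t / d(u, v)`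
approach `‖g_n‖ = 1` gives `‖G‖ ≥ |λ_n|`.
-/

section LipNorm

variable {M : Type*} [MetricSpace M] {f : M → ℝ}

lemma lipNorm_nonneg : 0 ≤ lipNorm f :=
  Real.sSup_nonneg fun _ ⟨_, _, _, hr⟩ => hr ▸ div_nonneg (abs_nonneg _) dist_nonneg

lemma mem_upperBounds_of_abs_sub_le {K : ℝ} (h : ∀ x y, |f x - f y| ≤ K * dist x y) :
    K ∈ upperBounds {r : ℝ | ∃ p q : M, p ≠ q ∧ r = |f p - f q| / dist p q} :=
  fun _ ⟨x, y, hxy, hr⟩ => hr ▸ (div_le_iff₀ (dist_pos.2 hxy)).2 (h x y)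

lemma lipNorm_le {K : ℝ} (hK : 0 ≤ K) (h : ∀ x y, |f x - f y| ≤ K * dist x y) :
    lipNorm f ≤ K :=
  Real.sSup_le (mem_upperBounds_of_abs_sub_le h) hK

lemma abs_sub_le_lipNorm_mul_dist
    (hf : BddAbove {r : ℝ | ∃ p q : M, p ≠ q ∧ r = |f p - f q| / dist p q}) (x y : M) :
    |f x - f y| ≤ lipNorm f * dist x y := by
  rcases eq_or_ne x y with rfl | hxy
  · simp
  · exact (div_le_iff₀ (dist_pos.2 hxy)).1 (le_csSup hf ⟨x, y, hxy, rfl⟩)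

lemma abs_sub_le_lipNorm_mul_dist_of_ne_zero (h : lipNorm f ≠ 0) (x y : M) :
    |f x - f y| ≤ lipNorm f * dist x y :=
  abs_sub_le_lipNorm_mul_dist (not_not.1 fun hb => h (Real.sSup_of_not_bddAbove hb)) x y

lemma abs_sub_le_lipNorm_mul_dist_of_le {K : ℝ} (h : ∀ x y, |f x - f y| ≤ K * dist x y)
    (x y : M) : |f x - f y| ≤ lipNorm f * dist x y :=
  abs_sub_le_lipNorm_mul_dist ⟨K, mem_upperBounds_of_abs_sub_le h⟩ x y

end LipNorm

lemma tsum_mul_eq_of_forall_ne {X : Type*} {g : ℕ → X → ℝ} {a : ℕ → ℝ} {n : ℕ} {x : X}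
    (h : ∀ m ≠ n, g m x = 0) : ∑' k, a k * g k x = a n * g n x :=
  tsum_eq_single n fun m hm => by rw [h m hm, mul_zero]

def SeparatedSupports {M : Type*} [MetricSpace M] (g : ℕ → M → ℝ) : Prop :=
  ∀ n m, n ≠ m → ∀ x y, g n x ≠ 0 → g m y ≠ 0 → |g n x| + |g m y| < dist x y

lemma separatedSupports_of_cone {M : Type*} [MetricSpace M] {p q : ℕ → M} {g : ℕ → M → ℝ}
    (hsep : ∀ n m, n ≠ m → dist (p n) (p m) > dist (p n) (q n) + dist (p m) (q m))
    (hgcone : ∀ n, ∀ x : M, |g n x| ≤ max 0 (dist (p n) (q n) - dist (p n) x)) :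
    SeparatedSupports g := by
  have hcone : ∀ n x, g n x ≠ 0 → |g n x| ≤ dist (p n) (q n) - dist (p n) x := fun n x hx =>
    (le_max_iff.1 (hgcone n x)).resolve_left (abs_pos.2 hx).not_ge
  intro n m hnm x y hx hy
  have hpp := hsep n m hnm
  have hx' := hcone n x hx
  have hy' := hcone m y hy
  have htri := dist_triangle4 (p n) x y (p m)
  rw [dist_comm y] at htri
  linarith

namespace SeparatedSupports

variable {M : Type*} [MetricSpace M] {g : ℕ → M → ℝ} (hg : SeparatedSupports g)
  {a : ℕ → ℝ} {A : ℝ}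
include hg

lemma eq_zero_of_ne {n m : ℕ} {x : M} (hnm : n ≠ m) (hx : g n x ≠ 0) : g m x = 0 := by
  by_contra hm
  have := hg n m hnm x x hx hm
  rw [dist_self] at this
  linarith [abs_nonneg (g n x), abs_nonneg (g m x)]

lemma tsum_mul_eq_of_ne_zero {n : ℕ} {x : M} (hx : g n x ≠ 0) :
    ∑' k, a k * g k x = a n * g n x :=
  tsum_mul_eq_of_forall_ne fun _ hm => hg.eq_zero_of_ne hm.symm hx

lemma tsum_sub_tsum_of_ne_zero {n : ℕ} {x : M} (hx : g n x ≠ 0) (y : M) :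
    (∑' k, a k * g k x) - ∑' k, a k * g k y = a n * (g n x - g n y) ∨
      ∃ m ≠ n, g m y ≠ 0 ∧
        (∑' k, a k * g k x) - ∑' k, a k * g k y = a n * g n x - a m * g m y := by
  rw [hg.tsum_mul_eq_of_ne_zero hx]
  by_cases hy : ∀ m ≠ n, g m y = 0
  · exact Or.inl (by rw [tsum_mul_eq_of_forall_ne hy, mul_sub])
  · push Not at hy
    obtain ⟨m, hmn, hm⟩ := hy
    exact Or.inr ⟨m, hmn, hm, by rw [hg.tsum_mul_eq_of_ne_zero hm]⟩

lemma abs_tsum_sub_le_or (ha : ∀ n, |a n| ≤ A) (x y : M) :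
    (∃ n, |(∑' k, a k * g k x) - ∑' k, a k * g k y| ≤ |a n| * |g n x - g n y|) ∨
      ∃ n m, |(∑' k, a k * g k x) - ∑' k, a k * g k y| ≤ A * (|g n x| + |g m y|) ∧
        |g n x| + |g m y| < dist x y := by
  wlog hx : ∃ n, g n x ≠ 0 generalizing x y
  · by_cases hy : ∃ n, g n y ≠ 0
    · rcases this y x hy with ⟨n, h⟩ | ⟨n, m, h, hlt⟩
      · exact Or.inl ⟨n, by rwa [abs_sub_comm, abs_sub_comm (g n x)]⟩
      · exact Or.inr ⟨m, n, by rwa [abs_sub_comm, add_comm], by rwa [add_comm, dist_comm]⟩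
    · push Not at hx hy
      exact Or.inl ⟨0, by simp [hx, hy]⟩
  obtain ⟨n, hn⟩ := hx
  rcases hg.tsum_sub_tsum_of_ne_zero (a := a) hn y with h | ⟨m, hmn, hm, h⟩
  · exact Or.inl ⟨n, by rw [h, abs_mul]⟩
  · refine Or.inr ⟨n, m, ?_, hg n m hmn.symm x y hn hm⟩
    calc _ ≤ |a n * g n x| + |a m * g m y| := h ▸ abs_sub _ _
      _ ≤ A * |g n x| + A * |g m y| := by
        rw [abs_mul, abs_mul]
        gcongr <;> exact ha _
      _ = A * (|g n x| + |g m y|) := (mul_add _ _ _).symm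

lemma abs_tsum_sub_le (hglip : ∀ n x y, |g n x - g n y| ≤ dist x y)
    (ha : ∀ n, |a n| ≤ A) (x y : M) :
    |(∑' k, a k * g k x) - ∑' k, a k * g k y| ≤ A * dist x y := by
  have hA : 0 ≤ A := (abs_nonneg _).trans (ha 0)
  rcases hg.abs_tsum_sub_le_or ha x y with ⟨n, h⟩ | ⟨n, m, h, hlt⟩
  · exact h.trans (mul_le_mul (ha n) (hglip n x y) (abs_nonneg _) hA)
  · exact h.trans (mul_le_mul_of_nonneg_left hlt.le hA)

lemma exists_abs_sub_eq_dist (hglip : ∀ n x y, |g n x - g n y| ≤ dist x y)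
    (ha : ∀ n, |a n| ≤ A) (hA : 0 < A) {x y : M}
    (h : |(∑' k, a k * g k x) - ∑' k, a k * g k y| = A * dist x y) :
    ∃ n, |g n x - g n y| = dist x y := by
  rcases hg.abs_tsum_sub_le_or ha x y with ⟨n, hn⟩ | ⟨n, m, hle, hlt⟩
  · refine ⟨n, le_antisymm (hglip n x y) (le_of_mul_le_mul_left ?_ hA)⟩
    exact h ▸ hn.trans (mul_le_mul_of_nonneg_right (ha n) (abs_nonneg _))
  · exact absurd (h ▸ hle.trans_lt (mul_lt_mul_of_pos_left hlt hA)) (lt_irrefl _)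

lemma abs_mul_sub_le_abs_tsum_sub (hglip : ∀ n x y, |g n x - g n y| ≤ dist x y)
    (ha : ∀ n, |a n| ≤ A) (n : ℕ) (u v : M) :
    |a n| * |g n u - g n v| - A * (dist u v - |g n u - g n v|) ≤
      |(∑' k, a k * g k u) - ∑' k, a k * g k v| := by
  wlog huv : |g n v| ≤ |g n u| generalizing u v
  · simpa only [abs_sub_comm, dist_comm] using this v u (le_of_not_ge huv)
  have hA : 0 ≤ A := (abs_nonneg _).trans (ha n)
  have hdist := hglip n u v
  by_cases hu : g n u = 0
  · have hv : g n v = 0 := abs_nonpos_iff.1 (by rwa [hu, abs_zero] at huv)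
    rw [hu, hv, sub_zero, abs_zero, mul_zero, sub_zero, zero_sub]
    exact (neg_nonpos.2 (mul_nonneg hA dist_nonneg)).trans (abs_nonneg _)
  rcases hg.tsum_sub_tsum_of_ne_zero (a := a) hu v with h | ⟨m, hmn, hm, h⟩
  · rw [h, abs_mul]
    linarith [mul_nonneg hA (sub_nonneg.2 hdist)]
  · have hsep := hg n m hmn.symm u v hu hm
    rw [h, hg.eq_zero_of_ne hmn hm, sub_zero]
    calc _ ≤ |a n| * |g n u| - |a m| * |g m v| := by
          nlinarith [mul_le_mul (ha m) (by linarith : |g m v| ≤ dist u v - |g n u|)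
            (abs_nonneg _) hA]
      _ ≤ |a n * g n u - a m * g m v| := by
          rw [← abs_mul, ← abs_mul]
          exact abs_sub_abs_le_abs_sub _ _

lemma lipNorm_tsum_le (hglip : ∀ n x y, |g n x - g n y| ≤ dist x y) (ha : ∀ n, |a n| ≤ A) :
    lipNorm (fun x => ∑' k, a k * g k x) ≤ A :=
  lipNorm_le ((abs_nonneg _).trans (ha 0)) (hg.abs_tsum_sub_le hglip ha)

lemma abs_le_lipNorm_tsum (hglip : ∀ n x y, |g n x - g n y| ≤ dist x y)
    (ha : ∀ n, |a n| ≤ A) {n : ℕ} (hgn : lipNorm (g n) = 1) :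
    |a n| ≤ lipNorm (fun x => ∑' k, a k * g k x) := by
  set L := lipNorm (fun x => ∑' k, a k * g k x)
  have hA : 0 ≤ A := (abs_nonneg _).trans (ha n)
  rcases (add_nonneg (abs_nonneg (a n)) hA).eq_or_lt with h0 | hpos
  · linarith [abs_nonneg (a n), lipNorm_nonneg (f := fun x => ∑' k, a k * g k x)]
  have hL : ∀ u v, |(∑' k, a k * g k u) - ∑' k, a k * g k v| ≤ L * dist u v :=
    abs_sub_le_lipNorm_mul_dist_of_le (hg.abs_tsum_sub_le hglip ha)
  have hK : lipNorm (g n) ≤ (L + A) / (|a n| + A) := by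
    refine lipNorm_le (div_nonneg (add_nonneg lipNorm_nonneg hA) hpos.le) fun u v => ?_
    rw [div_mul_eq_mul_div, le_div_iff₀ hpos]
    linarith [hg.abs_mul_sub_le_abs_tsum_sub hglip ha n u v, hL u v]
  rw [hgn, le_div_iff₀ hpos] at hK
  linarith

end SeparatedSupports

theorem disjoint_cone_sum_lipNorm_general {M : Type*} [MetricSpace M] (base : M)
    (p q : ℕ → M)
    (hsep : ∀ n m, n ≠ m → dist (p n) (p m) > dist (p n) (q n) + dist (p m) (q m))
    (g : ℕ → M → ℝ) (hg0 : ∀ n, g n base = 0)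
    (hgnorm : ∀ n, lipNorm (g n) = 1)
    (hgcone : ∀ n, ∀ x : M, |g n x| ≤ max 0 (dist (p n) (q n) - dist (p n) x))
    (a : lp (fun _ : ℕ => ℝ) ⊤) (ha : a ≠ 0) :
    MemLip0 base (fun x => ∑' n, a n * g n x) ∧
    lipNorm (fun x => ∑' n, a n * g n x) = ‖a‖ ∧
    ((∀ n, ¬ StronglyAttains (g n)) →
      ¬ StronglyAttains (fun x => ∑' n, a n * g n x)) := by
  have hg : SeparatedSupports g := separatedSupports_of_cone hsep hgcone
  have hglip : ∀ n x y, |g n x - g n y| ≤ dist x y := fun n x y => by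
    simpa [hgnorm n] using abs_sub_le_lipNorm_mul_dist_of_ne_zero (f := g n) (by simp [hgnorm n]) x y
  have hab : ∀ n, |a n| ≤ ‖a‖ := lp.norm_apply_le_norm ENNReal.top_ne_zero a
  have hnorm : lipNorm (fun x => ∑' n, a n * g n x) = ‖a‖ := by
    refine le_antisymm (hg.lipNorm_tsum_le hglip hab) ?_
    rw [lp.norm_eq_ciSup]
    exact ciSup_le fun n => hg.abs_le_lipNorm_tsum hglip hab (hgnorm n)
  refine ⟨⟨by simp [hg0], ‖a‖₊, LipschitzWith.of_dist_le_mul fun x y => ?_⟩, hnorm, ?_⟩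
  · simpa [Real.dist_eq] using hg.abs_tsum_sub_le hglip hab x y
  · rintro hns ⟨x, y, hxy, hattain⟩
    obtain ⟨n, hn⟩ := hg.exists_abs_sub_eq_dist hglip hab (norm_pos_iff.2 ha) (hnorm ▸ hattain)
    exact hns n ⟨x, y, hxy, by rw [hgnorm n, one_mul, hn]⟩

/-- Lemma on disjointly supported "cone-dominated" Lipschitz functions: the pointwise sum
`g^(λ) = Σ λ_n g_n` has Lipschitz norm `‖λ‖_∞`, and it does not strongly attain its norm
if no `g_n` does. -/
theorem disjoint_cone_sum_lipNorm {M : Type*} [MetricSpace M] [Infinite M] (base : M)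
    (p q : ℕ → M) (hpq : ∀ n, p n ≠ q n)
    (hsep : ∀ n m, n ≠ m → dist (p n) (p m) > dist (p n) (q n) + dist (p m) (q m))
    (g : ℕ → M → ℝ) (hg0 : ∀ n, g n base = 0)
    (hgnorm : ∀ n, lipNorm (g n) = 1)
    (hgcone : ∀ n, ∀ x : M, |g n x| ≤ max 0 (dist (p n) (q n) - dist (p n) x))
    (a : lp (fun _ : ℕ => ℝ) ⊤) (ha : a ≠ 0) :
    MemLip0 base (fun x => ∑' n, a n * g n x) ∧
    lipNorm (fun x => ∑' n, a n * g n x) = ‖a‖ ∧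
    ((∀ n, ¬ StronglyAttains (g n)) →
      ¬ StronglyAttains (fun x => ∑' n, a n * g n x)) :=
  disjoint_cone_sum_lipNorm_general base p q hsep g hg0 hgnorm hgcone a ha
end

section
/- Let M be a length metric space, let p₀, q₀ ∈ M be distinct points, set r := d(p₀, q₀) > 0, and define u : M → ℝ by u(x) = max{0, r − d(p₀, x)}. Then for every Lipschitz function f : [0, r] → ℝ, the optimal Lipschitz constant of f ∘ u : M → ℝ equals the optimal Lipschitz constant of f, i.e., sup{|f(u(p)) − f(u(q))|/d(p,q) : p ≠ q in M} = sup{|f(x) − f(y)|/|x − y| : x ≠ y in [0,r]}. -/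
open Filter Set
open scoped ZeroAtInfty ENNReal NNReal

/-- `M` is a length space: any two points can be joined by a continuous rectifiable curve
of length at most `dist x y + ε`, for every `ε > 0`. -/
def IsLengthSpace (M : Type*) [MetricSpace M] : Prop :=
  ∀ x y : M, ∀ ε : ℝ, 0 < ε → ∃ γ : ℝ → M,
    ContinuousOn γ (Set.Icc 0 1) ∧ γ 0 = x ∧ γ 1 = y ∧
    eVariationOn γ (Set.Icc 0 1) ≤ ENNReal.ofReal (dist x y + ε)

/-!
The cone `u = max 0 (r - dist p₀ ·)` is 1-Lipschitz with values in `[0, r]`, so `f ∘ u` is at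
least as Lipschitz as `f` on `[0, r]`. Conversely, given `0 ≤ y < x ≤ r`, follow a curve from
`p₀` to `q₀` of length at most `r + ε`: it passes through a point `p` at distance `r - x` from
`p₀` and then through a point `q` at distance `r - y`, and the remaining length forces
`dist p q ≤ x - y + ε`. Since `u p = x` and `u q = y`, every Lipschitz constant of `f ∘ u` is one
of `f` on `[0, r]`. So the two sets of slopes have the same upper bounds, hence the same supremum
(also when both are unbounded and the real `sSup` is `0`).
-/

theorem Real.sSup_eq_of_upperBounds_eq {s t : Set ℝ} (hs : s.Nonempty) (ht : t.Nonempty)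
    (h : upperBounds s = upperBounds t) : sSup s = sSup t := by
  by_cases hbdd : BddAbove s
  · have hbdd' : BddAbove t := by rwa [BddAbove, ← h]
    exact (isLUB_csSup hs hbdd).unique ((isLUB_congr h).2 (isLUB_csSup ht hbdd'))
  · have hbdd' : ¬BddAbove t := by rwa [BddAbove, ← h]
    rw [Real.sSup_of_not_bddAbove hbdd, Real.sSup_of_not_bddAbove hbdd']

section Slopes

variable {α : Type*} [MetricSpace α] {g : α → ℝ} {s : Set α}

def slopes (g : α → ℝ) (s : Set α) : Set ℝ :=
  {c | ∃ x ∈ s, ∃ y ∈ s, x ≠ y ∧ c = |g x - g y| / dist x y}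

theorem slopes_nonempty (hs : s.Nontrivial) : (slopes g s).Nonempty :=
  let ⟨x, hx, y, hy, hxy⟩ := hs
  ⟨_, x, hx, y, hy, hxy, rfl⟩

theorem nonneg_of_mem_upperBounds_slopes (hs : s.Nontrivial) {c : ℝ}
    (hc : c ∈ upperBounds (slopes g s)) : 0 ≤ c := by
  obtain ⟨x, hx, y, hy, hxy⟩ := hs
  exact (by positivity : 0 ≤ |g x - g y| / dist x y).trans (hc ⟨x, hx, y, hy, hxy, rfl⟩)

theorem coe_mem_upperBounds_slopes_iff {L : ℝ≥0} :
    (L : ℝ) ∈ upperBounds (slopes g s) ↔ LipschitzOnWith L g s := by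
  constructor
  · refine fun hL => LipschitzOnWith.of_dist_le_mul fun x hx y hy => ?_
    obtain rfl | hxy := eq_or_ne x y
    · simp
    have hslope := hL ⟨x, hx, y, hy, hxy, rfl⟩
    rwa [div_le_iff₀ (dist_pos.2 hxy), ← Real.dist_eq] at hslope
  · rintro hg _ ⟨x, hx, y, hy, hxy, rfl⟩
    rw [div_le_iff₀ (dist_pos.2 hxy), ← Real.dist_eq]
    exact hg.dist_le_mul x hx y hy

theorem sSup_slopes_eq_of_forall_lipschitzOnWith_iff {β : Type*} [MetricSpace β] {h : β → ℝ}
    {t : Set β} (hs : s.Nontrivial) (ht : t.Nontrivial)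
    (hgh : ∀ L : ℝ≥0, LipschitzOnWith L g s ↔ LipschitzOnWith L h t) :
    sSup (slopes g s) = sSup (slopes h t) := by
  refine Real.sSup_eq_of_upperBounds_eq (slopes_nonempty hs) (slopes_nonempty ht) ?_
  ext c
  constructor
  · intro hc
    lift c to ℝ≥0 using nonneg_of_mem_upperBounds_slopes hs hc
    exact coe_mem_upperBounds_slopes_iff.2 ((hgh c).1 (coe_mem_upperBounds_slopes_iff.1 hc))
  · intro hc
    lift c to ℝ≥0 using nonneg_of_mem_upperBounds_slopes ht hc
    exact coe_mem_upperBounds_slopes_iff.2 ((hgh c).2 (coe_mem_upperBounds_slopes_iff.1 hc))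

end Slopes

theorem eVariationOn.edist_add_edist_add_edist_le {α E : Type*} [LinearOrder α]
    [PseudoEMetricSpace E] (γ : α → E) {a t t' b : α} (hat : a ≤ t) (htt' : t ≤ t')
    (ht'b : t' ≤ b) :
    edist (γ a) (γ t) + edist (γ t) (γ t') + edist (γ t') (γ b) ≤ eVariationOn γ (Icc a b) := by
  have hab : a ≤ b := hat.trans (htt'.trans ht'b)
  have ht : t ∈ Icc a b := ⟨hat, htt'.trans ht'b⟩
  have ht' : t' ∈ Icc a b := ⟨hat.trans htt', ht'b⟩
  calc edist (γ a) (γ t) + edist (γ t) (γ t') + edist (γ t') (γ b)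
      ≤ eVariationOn γ (Icc a b ∩ Icc a t) + eVariationOn γ (Icc a b ∩ Icc t t') +
          eVariationOn γ (Icc a b ∩ Icc t' b) := by
        gcongr <;> apply eVariationOn.edist_le <;> simp_all
    _ = eVariationOn γ (Icc a b) := by
        rw [eVariationOn.Icc_add_Icc γ hat htt' ht, eVariationOn.Icc_add_Icc γ (hat.trans htt')
          ht'b ht', inter_self]

section Cone

variable {M : Type*} [PseudoMetricSpace M] {p₀ x : M} {r : ℝ}

def cone (p₀ : M) (r : ℝ) (x : M) : ℝ :=
  max 0 (r - dist p₀ x)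

theorem cone_mem_Icc (hr : 0 ≤ r) : cone p₀ r x ∈ Icc 0 r :=
  ⟨le_max_left _ _, max_le hr (sub_le_self r dist_nonneg)⟩

theorem cone_of_dist_le (h : dist p₀ x ≤ r) : cone p₀ r x = r - dist p₀ x :=
  max_eq_right (sub_nonneg.2 h)

theorem lipschitzWith_one_cone : LipschitzWith 1 (cone p₀ r) := by
  unfold cone
  simpa using ((LipschitzWith.const r).sub (LipschitzWith.dist_right p₀)).const_max 0

end Cone

namespace IsLengthSpace

variable {M : Type*} [MetricSpace M]

theorem exists_path_dist_add_dist_add_dist_le (hM : IsLengthSpace M) (x y : M) {ε : ℝ}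
    (hε : 0 < ε) :
    ∃ γ : ℝ → M, ContinuousOn γ (Icc 0 1) ∧ γ 0 = x ∧ γ 1 = y ∧ ∀ t t', 0 ≤ t → t ≤ t' →
      t' ≤ 1 → dist x (γ t) + dist (γ t) (γ t') + dist (γ t') y ≤ dist x y + ε := by
  obtain ⟨γ, hγ, hγ0, hγ1, hlength⟩ := hM x y ε hε
  refine ⟨γ, hγ, hγ0, hγ1, fun t t' ht0 htt' ht'1 => ?_⟩
  have hsum := (eVariationOn.edist_add_edist_add_edist_le γ ht0 htt' ht'1).trans hlength
  rwa [hγ0, hγ1, edist_dist, edist_dist, edist_dist, ← ENNReal.ofReal_add dist_nonneg dist_nonneg,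
    ← ENNReal.ofReal_add (by positivity) dist_nonneg,
    ENNReal.ofReal_le_ofReal_iff (by positivity)] at hsum

theorem exists_dist_eq_dist_eq_dist_le (hM : IsLengthSpace M) (p₀ q₀ : M) {a b ε : ℝ}
    (ha : 0 ≤ a) (hab : a ≤ b) (hb : b ≤ dist p₀ q₀) (hε : 0 < ε) :
    ∃ p q : M, dist p₀ p = a ∧ dist p₀ q = b ∧ dist p q ≤ b - a + ε := by
  obtain ⟨γ, hγ, hγ0, hγ1, hlength⟩ := hM.exists_path_dist_add_dist_add_dist_le p₀ q₀ hε
  have hφ : ContinuousOn (fun t => dist p₀ (γ t)) (Icc 0 1) :=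
    (continuous_const.dist continuous_id).comp_continuousOn hγ
  obtain ⟨t, ⟨ht0, ht1⟩, hta : dist p₀ (γ t) = a⟩ := intermediate_value_Icc zero_le_one hφ
    (show a ∈ Icc (dist p₀ (γ 0)) (dist p₀ (γ 1)) by
      rw [hγ0, hγ1, dist_self]; exact ⟨ha, hab.trans hb⟩)
  obtain ⟨t', ⟨htt', ht'1⟩, ht'b : dist p₀ (γ t') = b⟩ :=
    intermediate_value_Icc ht1 (hφ.mono (Icc_subset_Icc_left ht0))
      (show b ∈ Icc (dist p₀ (γ t)) (dist p₀ (γ 1)) by rw [hta, hγ1]; exact ⟨hab, hb⟩)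
  refine ⟨γ t, γ t', hta, ht'b, ?_⟩
  have hpath := hlength t t' ht0 htt' ht'1
  have htri := dist_triangle p₀ (γ t') q₀
  linarith

theorem lipschitzOnWith_of_comp_cone (hM : IsLengthSpace M) {p₀ q₀ : M} {f : ℝ → ℝ} {L : ℝ≥0}
    (hf : LipschitzWith L (f ∘ cone p₀ (dist p₀ q₀))) :
    LipschitzOnWith L f (Icc 0 (dist p₀ q₀)) := by
  set r := dist p₀ q₀
  refine LipschitzOnWith.of_dist_le_mul fun x hx y hy => ?_
  wlog hyx : y ≤ x generalizing x y
  · rw [dist_comm, dist_comm x]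
    exact this y hy x hx (le_of_not_ge hyx)
  refine le_of_forall_pos_le_add fun δ hδ => ?_
  obtain ⟨ε, hε, hLε⟩ := exists_pos_mul_lt hδ L
  obtain ⟨p, q, hp, hq, hpq⟩ := hM.exists_dist_eq_dist_eq_dist_le p₀ q₀ (a := r - x) (b := r - y)
    (by linarith [hx.2]) (by linarith) (by linarith [hy.1]) hε
  have hup : cone p₀ r p = x := by rw [cone_of_dist_le (by linarith [hx.1]), hp]; ring
  have huq : cone p₀ r q = y := by rw [cone_of_dist_le (by linarith [hy.1]), hq]; ring
  calc dist (f x) (f y) = dist ((f ∘ cone p₀ r) p) ((f ∘ cone p₀ r) q) := by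
        rw [Function.comp_apply, Function.comp_apply, hup, huq]
    _ ≤ L * dist p q := hf.dist_le_mul p q
    _ ≤ L * (dist x y + ε) := by
        gcongr
        rw [Real.dist_eq, abs_of_nonneg (sub_nonneg.2 hyx)]
        linarith
    _ ≤ L * dist x y + δ := by linarith

theorem lipschitzWith_comp_cone_iff (hM : IsLengthSpace M) {p₀ q₀ : M} {f : ℝ → ℝ}
    {L : ℝ≥0} :
    LipschitzWith L (f ∘ cone p₀ (dist p₀ q₀)) ↔ LipschitzOnWith L f (Icc 0 (dist p₀ q₀)) := by
  refine ⟨hM.lipschitzOnWith_of_comp_cone, fun hf => ?_⟩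
  simpa using hf.comp (lipschitzWith_one_cone.lipschitzOnWith (s := univ))
    (fun x _ => cone_mem_Icc dist_nonneg)

end IsLengthSpace

theorem lipNorm_comp_cone_eq_general {M : Type*} [MetricSpace M] (hM : IsLengthSpace M)
    (p₀ q₀ : M) (hne : p₀ ≠ q₀) (f : ℝ → ℝ) :
    sSup {s : ℝ | ∃ p q : M, p ≠ q ∧
        s = |f (max 0 (dist p₀ q₀ - dist p₀ p)) - f (max 0 (dist p₀ q₀ - dist p₀ q))| /
          dist p q} =
    sSup {s : ℝ | ∃ x ∈ Set.Icc 0 (dist p₀ q₀), ∃ y ∈ Set.Icc 0 (dist p₀ q₀),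
        x ≠ y ∧ s = |f x - f y| / |x - y|} := by
  have hr : 0 < dist p₀ q₀ := dist_pos.2 hne
  convert sSup_slopes_eq_of_forall_lipschitzOnWith_iff (g := f ∘ cone p₀ (dist p₀ q₀))
    (s := univ) (h := f) ⟨p₀, trivial, q₀, trivial, hne⟩
    ⟨0, left_mem_Icc.2 hr.le, _, right_mem_Icc.2 hr.le, hr.ne⟩
    (fun L => lipschitzOnWith_univ.trans hM.lipschitzWith_comp_cone_iff) using 2
  · ext; simp [slopes, cone]
  · ext; simp [slopes, Real.dist_eq]

/-- In a length space, composing with the "cone" function `u(x) = max{0, r − d(p₀,x)}`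
preserves the optimal Lipschitz constant of any Lipschitz `f : [0,r] → ℝ`. -/
theorem lipNorm_comp_cone_eq {M : Type*} [MetricSpace M] (hM : IsLengthSpace M)
    (p₀ q₀ : M) (hne : p₀ ≠ q₀) (f : ℝ → ℝ) (K : ℝ≥0)
    (hf : LipschitzOnWith K f (Set.Icc 0 (dist p₀ q₀))) :
    sSup {s : ℝ | ∃ p q : M, p ≠ q ∧
        s = |f (max 0 (dist p₀ q₀ - dist p₀ p)) - f (max 0 (dist p₀ q₀ - dist p₀ q))| /
          dist p q} =
    sSup {s : ℝ | ∃ x ∈ Set.Icc 0 (dist p₀ q₀), ∃ y ∈ Set.Icc 0 (dist p₀ q₀),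
        x ≠ y ∧ s = |f x - f y| / |x - y|} :=
  lipNorm_comp_cone_eq_general hM p₀ q₀ hne f
end

section
/- Let M be an infinite metric space with a distinguished base point 0, and suppose the set M′ of accumulation points of M has density character at least 2^ℵ₀ (i.e., every dense subset of M′ has cardinality at least the cardinality of the continuum). Then (PNA(M) \ SNA(M)) ∪ {0} contains an isometric copy of ℓ₁: there exists a linear map T : ℓ₁ → Lip₀(M) such that ‖T a‖ = ‖a‖₁ for every a ∈ ℓ₁, and for every nonzero a, the function T a attains its pointwise norm but does not strongly attain its norm. -/
/-!
Since `M'` has density character at least `𝔠` and `ℵ₀ < cof 𝔠`, some maximal `δ`-separated subset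
of `M'` has cardinality `𝔠`; index `𝔠` of its points by the sign patterns `s ∈ {-1, 0, 1}^ℕ`.
Around the centre `P s` place the tent `t ↦ t (c - t) / c` of `dist x (P s)`, `2c = δ`, weighted
by `⟨a, s⟩ = ∑ aₙ sₙ`, and let `T a` be the resulting function shifted to vanish at the base point.
The tent is strictly `1`-Lipschitz with slope `1` at `0`, and `|⟨a, s⟩| ≤ ‖a‖₁` with equality for
`s = sign a`. Hence every difference quotient of `T a` is `< ‖a‖₁`, while those at `P (sign a)`
tend to `‖a‖₁`, which is therefore both the Lipschitz norm and the pointwise norm there.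
-/

open Filter Set
open scoped ZeroAtInfty ENNReal NNReal

universe u

open Topology

noncomputable def bump (c t : ℝ) : ℝ := t * max (c - t) 0 / c

lemma bump_zero (c : ℝ) : bump c 0 = 0 := by simp [bump]

lemma bump_of_le {c t : ℝ} (h : c ≤ t) : bump c t = 0 := by
  simp [bump, max_eq_right (sub_nonpos.2 h)]

lemma bump_nonneg {c t : ℝ} (hc : 0 < c) (ht : 0 ≤ t) : 0 ≤ bump c t := by
  unfold bump; positivity

lemma abs_bump_sub_lt {c s t : ℝ} (hc : 0 < c) (hs : 0 ≤ s) (ht : 0 ≤ t) (hst : s ≠ t) :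
    |bump c s - bump c t| < |s - t| := by
  wlog h : s < t generalizing s t
  · rw [abs_sub_comm, abs_sub_comm s]
    exact this ht hs hst.symm (lt_of_le_of_ne (not_lt.1 h) hst.symm)
  rw [abs_of_neg (sub_neg.2 h), abs_lt]
  rcases le_total t c with htc | hct
  · simp only [bump, max_eq_left (sub_nonneg.2 htc), max_eq_left (sub_nonneg.2 (h.le.trans htc))]
    rw [← sub_div, lt_div_iff₀ hc, div_lt_iff₀ hc]
    constructor <;> nlinarith
  · rw [bump_of_le hct, sub_zero]
    rcases lt_or_ge s c with hsc | hcs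
    · have : bump c s = s * (c - s) / c := by simp [bump, max_eq_left (sub_nonneg.2 hsc.le)]
      rw [this, lt_div_iff₀ hc, div_lt_iff₀ hc]
      constructor <;> nlinarith
    · rw [bump_of_le hcs]; constructor <;> linarith

lemma bump_lt_sub {c t : ℝ} (hc : 0 < c) (ht : 0 ≤ t) (htc : t < c) : bump c t < c - t := by
  simpa [bump_of_le le_rfl, abs_of_nonneg (bump_nonneg hc ht), abs_of_neg (sub_neg.2 htc)]
    using abs_bump_sub_lt hc ht hc.le htc.ne

lemma tendsto_bump_div {c : ℝ} (hc : 0 < c) :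
    Tendsto (fun t => bump c t / t) (𝓝[>] 0) (𝓝 1) := by
  have hlim : Tendsto (fun t : ℝ => (c - t) / c) (𝓝 0) (𝓝 1) :=
    ((continuous_const.sub continuous_id).div_const c).tendsto' 0 1 (by simp [hc.ne'])
  refine (hlim.mono_left nhdsWithin_le_nhds).congr' ?_
  filter_upwards [Ioo_mem_nhdsGT hc] with t ht
  rw [bump, max_eq_left (sub_nonneg.2 ht.2.le)]
  field_simp [ht.1.ne']

section BumpSum

variable {ι M : Type*} [MetricSpace M] {P : ι → M} {c : ℝ}

open Classical in
/-- `x ↦ ∑ i, A i * bump c (dist x (P i))`, written with a choice: for `2c`-separated centres at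
most one term is nonzero. -/
noncomputable def bumpSum (P : ι → M) (c : ℝ) : (ι → ℝ) →ₗ[ℝ] M → ℝ where
  toFun A x := if h : ∃ i, dist x (P i) < c then A h.choose * bump c (dist x (P h.choose)) else 0
  map_add' A B := by ext x; by_cases h : ∃ i, dist x (P i) < c <;> simp [h, add_mul]
  map_smul' r A := by ext x; by_cases h : ∃ i, dist x (P i) < c <;> simp [h, mul_assoc]

lemma bumpSum_apply_of_forall_ne {A : ι → ℝ} {x : M} {i : ι}
    (h : ∀ j ≠ i, c ≤ dist x (P j)) : bumpSum P c A x = A i * bump c (dist x (P i)) := by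
  simp only [bumpSum, LinearMap.coe_mk, AddHom.coe_mk]
  split_ifs with hx
  · obtain rfl : hx.choose = i := by_contra fun hne => (h _ hne).not_gt hx.choose_spec
    rfl
  · rw [bump_of_le (not_lt.1 fun hi => hx ⟨i, hi⟩), mul_zero]

lemma le_dist_of_lt_of_ne (hsep : Pairwise fun i j => 2 * c ≤ dist (P i) (P j)) {x : M} {i j : ι}
    (hi : dist x (P i) < c) (hji : j ≠ i) : c ≤ dist x (P j) := by
  have := dist_triangle_left (P j) (P i) x
  linarith [hsep hji]

lemma bumpSum_apply_of_lt (hsep : Pairwise fun i j => 2 * c ≤ dist (P i) (P j)) {A : ι → ℝ}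
    {x : M} {i : ι} (hi : dist x (P i) < c) : bumpSum P c A x = A i * bump c (dist x (P i)) :=
  bumpSum_apply_of_forall_ne fun _ hji => le_dist_of_lt_of_ne hsep hi hji

lemma abs_bump_dist_sub_lt (hc : 0 < c) {x y : M} (p : M) (hxy : x ≠ y) :
    |bump c (dist x p) - bump c (dist y p)| < dist x y := by
  rcases eq_or_ne (dist x p) (dist y p) with h | h
  · simpa [h] using hxy
  · exact (abs_bump_sub_lt hc dist_nonneg dist_nonneg h).trans_le (abs_dist_sub_le x y p)

lemma exists_common_center [Nonempty ι] (hsep : Pairwise fun i j => 2 * c ≤ dist (P i) (P j))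
    {x y : M} (h : ∀ i j, i ≠ j → dist x (P i) < c → c ≤ dist y (P j)) :
    ∃ i, (∀ j ≠ i, c ≤ dist x (P j)) ∧ ∀ j ≠ i, c ≤ dist y (P j) := by
  by_cases hx : ∃ i, dist x (P i) < c
  · obtain ⟨i, hi⟩ := hx
    exact ⟨i, fun j => le_dist_of_lt_of_ne hsep hi, fun j hji => h i j hji.symm hi⟩
  by_cases hy : ∃ i, dist y (P i) < c
  · obtain ⟨i, hi⟩ := hy
    exact ⟨i, fun j _ => not_lt.1 fun hj => hx ⟨j, hj⟩, fun j => le_dist_of_lt_of_ne hsep hi⟩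
  · obtain ⟨i⟩ := ‹Nonempty ι›
    exact ⟨i, fun j _ => not_lt.1 fun hj => hx ⟨j, hj⟩, fun j _ => not_lt.1 fun hj => hy ⟨j, hj⟩⟩

lemma exists_abs_bumpSum_sub_le [Nonempty ι] (hc : 0 < c)
    (hsep : Pairwise fun i j => 2 * c ≤ dist (P i) (P j)) {A : ι → ℝ} {L : ℝ}
    (hA : ∀ i, |A i| ≤ L) {x y : M} (hxy : x ≠ y) :
    ∃ G < dist x y, |bumpSum P c A x - bumpSum P c A y| ≤ L * G := by
  by_cases h : ∃ i j, i ≠ j ∧ dist x (P i) < c ∧ dist y (P j) < c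
  · obtain ⟨i, j, hij, hi, hj⟩ := h
    refine ⟨bump c (dist x (P i)) + bump c (dist y (P j)), ?_, ?_⟩
    · have hbx := bump_lt_sub hc dist_nonneg hi
      have hby := bump_lt_sub hc dist_nonneg hj
      have hPij : 2 * c ≤ dist (P i) (P j) := hsep hij
      have := dist_triangle4 (P i) x y (P j)
      rw [dist_comm (P i) x] at this
      linarith
    · have hle : ∀ k {t}, 0 ≤ t → |A k * bump c t| ≤ L * bump c t := fun k t ht => by
        rw [abs_mul, abs_of_nonneg (bump_nonneg hc ht)]
        exact mul_le_mul_of_nonneg_right (hA k) (bump_nonneg hc ht)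
      rw [bumpSum_apply_of_lt hsep hi, bumpSum_apply_of_lt hsep hj, mul_add]
      exact (abs_sub _ _).trans (add_le_add (hle i dist_nonneg) (hle j dist_nonneg))
  · push Not at h
    obtain ⟨i, hxi, hyi⟩ := exists_common_center hsep h
    refine ⟨_, abs_bump_dist_sub_lt hc (P i) hxy, ?_⟩
    rw [bumpSum_apply_of_forall_ne hxi, bumpSum_apply_of_forall_ne hyi, ← mul_sub, abs_mul]
    exact mul_le_mul_of_nonneg_right (hA i) (abs_nonneg _)

lemma abs_bumpSum_sub_le [Nonempty ι] (hc : 0 < c)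
    (hsep : Pairwise fun i j => 2 * c ≤ dist (P i) (P j)) {A : ι → ℝ} {L : ℝ}
    (hA : ∀ i, |A i| ≤ L) (hL : 0 ≤ L) (x y : M) :
    |bumpSum P c A x - bumpSum P c A y| ≤ L * dist x y := by
  rcases eq_or_ne x y with rfl | hxy
  · simp
  obtain ⟨G, hG, hle⟩ := exists_abs_bumpSum_sub_le hc hsep hA hxy
  exact hle.trans (mul_le_mul_of_nonneg_left hG.le hL)

lemma abs_bumpSum_sub_lt [Nonempty ι] (hc : 0 < c)
    (hsep : Pairwise fun i j => 2 * c ≤ dist (P i) (P j)) {A : ι → ℝ} {L : ℝ}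
    (hA : ∀ i, |A i| ≤ L) (hL : 0 < L) {x y : M} (hxy : x ≠ y) :
    |bumpSum P c A x - bumpSum P c A y| < L * dist x y := by
  obtain ⟨G, hG, hle⟩ := exists_abs_bumpSum_sub_le hc hsep hA hxy
  exact hle.trans_lt (mul_lt_mul_of_pos_left hG hL)

lemma tendsto_slope_bumpSum (hc : 0 < c) (hsep : Pairwise fun i j => 2 * c ≤ dist (P i) (P j))
    (A : ι → ℝ) (i : ι) :
    Tendsto (fun q => |bumpSum P c A (P i) - bumpSum P c A q| / dist (P i) q) (𝓝[≠] P i)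
      (𝓝 |A i|) := by
  have hdist : Tendsto (fun q => dist q (P i)) (𝓝[≠] P i) (𝓝[>] 0) := by
    refine tendsto_nhdsWithin_iff.2 ⟨?_, eventually_nhdsWithin_of_forall fun q hq => ?_⟩
    · exact ((continuous_id.dist continuous_const).tendsto' (P i) 0 (dist_self _)).mono_left
        nhdsWithin_le_nhds
    · exact dist_pos.2 hq
  have hlim := ((tendsto_bump_div hc).comp hdist).const_mul |A i|
  rw [mul_one] at hlim
  refine hlim.congr' ?_
  filter_upwards [nhdsWithin_le_nhds (Metric.ball_mem_nhds (P i) hc)] with q hq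
  rw [bumpSum_apply_of_lt hsep hq, bumpSum_apply_of_lt hsep (Metric.mem_ball_self hc), dist_self,
    bump_zero, mul_zero, zero_sub, abs_neg, abs_mul, abs_of_nonneg (bump_nonneg hc dist_nonneg),
    dist_comm (P i), Function.comp_apply, mul_div_assoc]

end BumpSum

section LipNorm

variable {M : Type*} [MetricSpace M] {f : M → ℝ} {L : ℝ}

lemma div_dist_le_of_abs_sub_le (hle : ∀ x y, |f x - f y| ≤ L * dist x y) {p q : M}
    (hpq : p ≠ q) : |f p - f q| / dist p q ≤ L :=
  (div_le_iff₀ (dist_pos.2 hpq)).2 (hle p q)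

variable {p : M} [(𝓝[≠] p).NeBot]

lemma nonempty_slopes (f : M → ℝ) :
    {r | ∃ q, q ≠ p ∧ r = |f p - f q| / dist p q}.Nonempty :=
  let ⟨q, hq⟩ := Filter.nonempty_of_mem (self_mem_nhdsWithin : {p}ᶜ ∈ 𝓝[≠] p)
  ⟨_, q, hq, rfl⟩

lemma isLUB_slopes_of_tendsto (hle : ∀ x y, |f x - f y| ≤ L * dist x y)
    (hp : Tendsto (fun q => |f p - f q| / dist p q) (𝓝[≠] p) (𝓝 L)) :
    IsLUB {r | ∃ q, q ≠ p ∧ r = |f p - f q| / dist p q} L :=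
  isLUB_of_mem_closure (by rintro _ ⟨q, hq, rfl⟩; exact div_dist_le_of_abs_sub_le hle hq.symm)
    (mem_closure_of_tendsto hp (eventually_nhdsWithin_of_forall fun q hq => ⟨q, hq, rfl⟩))

lemma lipNorm_eq_of_tendsto (hle : ∀ x y, |f x - f y| ≤ L * dist x y)
    (hp : Tendsto (fun q => |f p - f q| / dist p q) (𝓝[≠] p) (𝓝 L)) : lipNorm f = L := by
  have hslopes := isLUB_slopes_of_tendsto hle hp
  have hsub : {r | ∃ q, q ≠ p ∧ r = |f p - f q| / dist p q} ⊆
      {r | ∃ p q, p ≠ q ∧ r = |f p - f q| / dist p q} := by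
    rintro _ ⟨q, hq, rfl⟩; exact ⟨p, q, hq.symm, rfl⟩
  refine IsLUB.csSup_eq ⟨?_, fun b hb => hslopes.2 fun r hr => hb (hsub hr)⟩
    ((nonempty_slopes f).mono hsub)
  rintro _ ⟨x, y, hxy, rfl⟩
  exact div_dist_le_of_abs_sub_le hle hxy

lemma pointwiseAttains_of_tendsto (hle : ∀ x y, |f x - f y| ≤ L * dist x y)
    (hp : Tendsto (fun q => |f p - f q| / dist p q) (𝓝[≠] p) (𝓝 L)) : PointwiseAttains f :=
  ⟨p, by rw [(isLUB_slopes_of_tendsto hle hp).csSup_eq (nonempty_slopes f),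
    lipNorm_eq_of_tendsto hle hp]⟩

end LipNorm

section SignPairing

open scoped lp

lemma lp_one_norm_eq_tsum_abs (a : ℓ¹(ℕ, ℝ)) : ‖a‖ = ∑' n, |a n| := by
  simp [lp.norm_eq_tsum_rpow (by simp : 0 < (1 : ℝ≥0∞).toReal)]

lemma summable_abs_lp_one (a : ℓ¹(ℕ, ℝ)) : Summable fun n => |a n| := by
  simpa using (lp.memℓp a).summable (by simp)

lemma abs_mul_signType_le (x : ℝ) (s : SignType) : |x * s| ≤ |x| := by
  cases s <;> simp

lemma summable_mul_signType (a : ℓ¹(ℕ, ℝ)) (s : ℕ → SignType) :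
    Summable fun n => a n * s n :=
  .of_norm_bounded (summable_abs_lp_one a) fun _ => abs_mul_signType_le _ _

noncomputable def signPairing : ℓ¹(ℕ, ℝ) →ₗ[ℝ] (ℕ → SignType) → ℝ where
  toFun a s := ∑' n, a n * s n
  map_add' a b := by
    ext s
    simp only [lp.coeFn_add, Pi.add_apply, add_mul]
    exact (summable_mul_signType a s).tsum_add (summable_mul_signType b s)
  map_smul' r a := by
    ext s
    simp only [lp.coeFn_smul, Pi.smul_apply, smul_eq_mul, mul_assoc, tsum_mul_left]
    rfl

lemma abs_signPairing_le (a : ℓ¹(ℕ, ℝ)) (s : ℕ → SignType) : |signPairing a s| ≤ ‖a‖ := by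
  rw [lp_one_norm_eq_tsum_abs]
  exact (norm_tsum_le_tsum_norm (summable_mul_signType a s).norm).trans <|
    (summable_mul_signType a s).norm.tsum_le_tsum (fun _ => abs_mul_signType_le _ _)
      (summable_abs_lp_one a)

lemma signPairing_sign (a : ℓ¹(ℕ, ℝ)) : signPairing a (fun n => SignType.sign (a n)) = ‖a‖ := by
  simp [signPairing, lp_one_norm_eq_tsum_abs]

end SignPairing

section Separated

open Cardinal Metric

theorem Cardinal.exists_continuum_le_mk_of_continuum_le_mk_iUnion {α : Type*} {D : ℕ → Set α}
    (h : 𝔠 ≤ #(⋃ n, D n)) : ∃ n, 𝔠 ≤ #(D n) := by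
  by_contra! hlt
  -- König: `ℵ₀ < cof 𝔠`, so a countable supremum of cardinals below `𝔠` stays below `𝔠`
  have hcof : ℵ₀ < (𝔠 : Cardinal).ord.cof := by
    simpa [two_power_aleph0] using lt_cof_ord_power le_rfl one_lt_two
  have hsup : ⨆ n, #(D n) < 𝔠 := lift_iSup_lt_of_lt_cof_ord (by simpa using hcof) hlt
  have := mk_iUnion_le_lift D
  simp only [lift_uzero, mk_nat, lift_aleph0] at this
  exact (h.trans this).not_gt (mul_lt_of_lt aleph0_le_continuum aleph0_lt_continuum hsup)

lemma Cardinal.mk_nat_arrow_signType : #(ℕ → SignType) = 𝔠 := by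
  rw [← power_def, mk_fintype, mk_nat]
  exact nat_power_aleph0 (by decide)

lemma Metric.IsSeparated.le_dist {X : Type*} [PseudoMetricSpace X] {ε : ℝ≥0} {s : Set X}
    (hs : Metric.IsSeparated ε s) {x y : X} (hx : x ∈ s) (hy : y ∈ s) (hxy : x ≠ y) :
    ε ≤ dist x y := by
  have : (ε : ℝ≥0∞) < edist x y := hs hx hy hxy
  rw [edist_nndist, ENNReal.coe_lt_coe] at this
  exact this.le

variable {X : Type*} [PseudoEMetricSpace X]

lemma exists_maximal_isSeparated (ε : ℝ≥0∞) (s : Set X) :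
    ∃ N, Maximal (fun N => N ⊆ s ∧ IsSeparated ε N) N :=
  zorn_subset _ fun c hcs hc => ⟨⋃₀ c, ⟨sUnion_subset fun _ hN => (hcs hN).1,
    hc.pairwise_sUnion.2 fun _ hN => (hcs hN).2⟩, fun _ => subset_sUnion_of_mem⟩

lemma exists_isSeparated_continuum_le_mk {S : Set X}
    (hS : ∀ D ⊆ S, S ⊆ closure D → 𝔠 ≤ #D) :
    ∃ ε : ℝ≥0, 0 < ε ∧ ∃ N ⊆ S, IsSeparated ε N ∧ 𝔠 ≤ #N := by
  let ε : ℕ → ℝ≥0 := fun n => (n + 1)⁻¹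
  choose N hN using fun n => exists_maximal_isSeparated (ε n) S
  have hdense : S ⊆ closure (⋃ n, N n) := by
    intro x hx
    refine EMetric.mem_closure_iff.2 fun r hr => ?_
    obtain ⟨n, hn⟩ := ENNReal.exists_inv_nat_lt hr.ne'
    obtain ⟨y, hy, hxy⟩ := IsCover.of_maximal_isSeparated (hN n) hx
    refine ⟨y, mem_iUnion.2 ⟨n, hy⟩, lt_of_le_of_lt ?_ hn⟩
    calc edist x y ≤ ε n := hxy
      _ ≤ (n : ℝ≥0∞)⁻¹ := by
        simp only [ε, ENNReal.coe_inv (Nat.cast_add_one_ne_zero n)]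
        exact ENNReal.inv_le_inv.2 (by simp)
  obtain ⟨n, hn⟩ := exists_continuum_le_mk_of_continuum_le_mk_iUnion
    (hS _ (iUnion_subset fun n => (hN n).1.1) hdense)
  exact ⟨ε n, by positivity, N n, (hN n).1.1, (hN n).1.2, hn⟩

end Separated

section Embedding

open scoped lp

variable {M : Type*} [MetricSpace M]

noncomputable def l1Embedding (P : (ℕ → SignType) → M) (c : ℝ) (base : M) :
    ℓ¹(ℕ, ℝ) →ₗ[ℝ] M → ℝ where
  toFun a x := bumpSum P c (signPairing a) x - bumpSum P c (signPairing a) base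
  map_add' a b := by ext x; simp only [map_add, Pi.add_apply]; ring
  map_smul' r a := by
    ext x; simp only [map_smul, Pi.smul_apply, smul_eq_mul, RingHom.id_apply]; ring

lemma l1Embedding_apply_sub (P : (ℕ → SignType) → M) (c : ℝ) (base : M) (a : ℓ¹(ℕ, ℝ))
    (x y : M) :
    l1Embedding P c base a x - l1Embedding P c base a y =
      bumpSum P c (signPairing a) x - bumpSum P c (signPairing a) y :=
  sub_sub_sub_cancel_right _ _ (bumpSum P c (signPairing a) base)

theorem exists_l1_embedding_of_separated {P : (ℕ → SignType) → M} {c : ℝ} (hc : 0 < c)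
    (hsep : Pairwise fun i j => 2 * c ≤ dist (P i) (P j)) (hacc : ∀ i, (𝓝[≠] P i).NeBot)
    (base : M) :
    ∃ T : ℓ¹(ℕ, ℝ) →ₗ[ℝ] (M → ℝ), ∀ a : ℓ¹(ℕ, ℝ),
      MemLip0 base (T a) ∧ lipNorm (T a) = ‖a‖ ∧
        (a ≠ 0 → PointwiseAttains (T a) ∧ ¬ StronglyAttains (T a)) := by
  refine ⟨l1Embedding P c base, fun a => ?_⟩
  have hA := abs_signPairing_le a
  have hle (x y : M) :
      |l1Embedding P c base a x - l1Embedding P c base a y| ≤ ‖a‖ * dist x y := by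
    rw [l1Embedding_apply_sub]
    exact abs_bumpSum_sub_le hc hsep hA (norm_nonneg a) x y
  let σ : ℕ → SignType := fun n => SignType.sign (a n)
  have hslope : Tendsto (fun q => |l1Embedding P c base a (P σ) - l1Embedding P c base a q| /
      dist (P σ) q) (𝓝[≠] P σ) (𝓝 ‖a‖) := by
    simp_rw [l1Embedding_apply_sub]
    simpa [σ, signPairing_sign] using tendsto_slope_bumpSum hc hsep (signPairing a) σ
  have := hacc σ
  have hnorm := lipNorm_eq_of_tendsto hle hslope
  refine ⟨⟨sub_self _, ‖a‖₊, LipschitzWith.of_dist_le_mul fun x y => hle x y⟩, hnorm,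
    fun ha => ⟨pointwiseAttains_of_tendsto hle hslope, ?_⟩⟩
  rintro ⟨x, y, hxy, h⟩
  rw [hnorm, l1Embedding_apply_sub] at h
  exact (abs_bumpSum_sub_lt hc hsep hA (norm_pos_iff.2 ha) hxy).ne h

end Embedding

theorem l1_in_PNA_not_SNA_general {M : Type u} [MetricSpace M] (base : M)
    (M' : Set M) (hM' : M' = {x : M | AccPt x (Filter.principal (Set.univ : Set M))})
    (hlow : ∀ D : Set M, D ⊆ M' → M' ⊆ closure D →
      Cardinal.continuum ≤ Cardinal.mk ↥D) :
    ∃ T : lp (fun _ : ℕ => ℝ) 1 →ₗ[ℝ] (M → ℝ),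
      ∀ a : lp (fun _ : ℕ => ℝ) 1,
        MemLip0 base (T a) ∧ lipNorm (T a) = ‖a‖ ∧
        (a ≠ 0 → PointwiseAttains (T a) ∧ ¬ StronglyAttains (T a)) := by
  obtain ⟨ε, hε, N, hNM', hNsep, hN⟩ := exists_isSeparated_continuum_le_mk hlow
  obtain ⟨e⟩ : Nonempty ((ℕ → SignType) ↪ N) := by
    rw [← Cardinal.lift_mk_le', Cardinal.mk_nat_arrow_signType, Cardinal.lift_continuum,
      Cardinal.lift_uzero]
    exact hN
  refine exists_l1_embedding_of_separated (P := fun s => (e s : M)) (c := ε / 2) (by positivity)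
    (fun s t hst => ?_) (fun s => ?_) base
  · rw [mul_div_cancel₀ _ two_ne_zero]
    exact hNsep.le_dist (e s).2 (e t).2 (Subtype.coe_injective.ne (e.injective.ne hst))
  · simpa [hM', AccPt] using hNM' (e s).2

/-- If the set of accumulation points of an infinite metric space `M` has density character
at least `2^ℵ₀`, then `(PNA(M) \ SNA(M)) ∪ {0}` contains an isometric copy of `ℓ₁`. -/
theorem l1_in_PNA_not_SNA {M : Type u} [MetricSpace M] [Infinite M] (base : M)
    (M' : Set M) (hM' : M' = {x : M | AccPt x (Filter.principal (Set.univ : Set M))})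
    (hlow : ∀ D : Set M, D ⊆ M' → M' ⊆ closure D →
      Cardinal.continuum ≤ Cardinal.mk ↥D) :
    ∃ T : lp (fun _ : ℕ => ℝ) 1 →ₗ[ℝ] (M → ℝ),
      ∀ a : lp (fun _ : ℕ => ℝ) 1,
        MemLip0 base (T a) ∧ lipNorm (T a) = ‖a‖ ∧
        (a ≠ 0 → PointwiseAttains (T a) ∧ ¬ StronglyAttains (T a)) :=
  l1_in_PNA_not_SNA_general base M' hM' hlow
end

section
/- Let M be an infinite pointed metric space and suppose there is a sequence (f_n) in Lip₀(M) such that: (a1) the supports {x : f_n(x) ≠ 0} are pairwise disjoint; and (a2′) for every bounded real sequence a = (a_n), the series Σ_n a_n f_n converges pointwise to a function f^(a) ∈ Lip₀(M) with ‖f^(a)‖ = ‖a‖_∞, and f^(a) strongly attains its norm if and only if there exists n₀ with |a_{n₀}| = ‖a‖_∞. Then neither SNA(M) nor (Lip₀(M) \ SNA(M)) ∪ {0} is a linear subspace of Lip₀(M); concretely, there exist f, g ∈ SNA(M) with f + g ∉ SNA(M), and there exist f′, g′ ∈ Lip₀(M) \ SNA(M) with f′ − g′ ∈ SNA(M) and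 f′ − g′ ≠ 0. -/
open Filter Set
open scoped ZeroAtInfty ENNReal NNReal

/-! The map `a ↦ ∑ aₙ fₙ` is additive on `ℓ^∞`, so it suffices to exhibit bounded sequences
with the right pattern of attained suprema. Let `t = (n / (n + 1))ₙ`, whose supremum `1` is not
attained, and let `e c` be the sequence `(c, 0, 0, …)`. Then `t + e 1` and `e (-1)` attain their
norms but their sum `t` does not; `t + e (1/2)` and `t` do not, but their difference `e (1/2)`
does and is nonzero. -/

open Topology

local notation "ℓ^∞" => lp (fun _ : ℕ => ℝ) ∞

section TsumMul

variable {ι α : Type*} [TopologicalSpace α] [T2Space α] {a b g : ι → α}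

theorem tsum_mul_add_tsum_mul [NonUnitalNonAssocSemiring α] [ContinuousAdd α]
    (ha : Summable fun i => a i * g i) (hb : Summable fun i => b i * g i) :
    ∑' i, a i * g i + ∑' i, b i * g i = ∑' i, (a i + b i) * g i := by
  simp_rw [add_mul]
  exact (ha.tsum_add hb).symm

theorem tsum_mul_sub_tsum_mul [NonUnitalNonAssocRing α] [IsTopologicalAddGroup α]
    (ha : Summable fun i => a i * g i) (hb : Summable fun i => b i * g i) :
    ∑' i, a i * g i - ∑' i, b i * g i = ∑' i, (a i - b i) * g i := by
  simp_rw [sub_mul]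
  exact (ha.tsum_sub hb).symm

end TsumMul

theorem lipNorm_zero {M : Type*} [MetricSpace M] : lipNorm (0 : M → ℝ) = 0 := by
  have hzero : ∀ r ∈ {r : ℝ | ∃ p q : M, p ≠ q ∧ r = |(0 : M → ℝ) p - (0 : M → ℝ) q| / dist p q},
      r = 0 := by
    rintro r ⟨p, q, -, rfl⟩
    simp
  exact le_antisymm (Real.sSup_nonpos fun r hr => (hzero r hr).le)
    (Real.sSup_nonneg fun r hr => (hzero r hr).ge)

theorem lp.norm_eq_of_isLUB_of_le {ι : Type*} [Nonempty ι] {E : ι → Type*}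
    [∀ i, NormedAddCommGroup (E i)] {a : lp E ∞} {t : ι → ℝ} {r : ℝ}
    (ht : IsLUB (range t) r) (hlo : ∀ i, t i ≤ ‖a i‖) (hhi : ∀ i, ‖a i‖ ≤ r) : ‖a‖ = r :=
  le_antisymm ((lp.isLUB_norm a).2 (forall_mem_range.2 hhi))
    (ht.2 (forall_mem_range.2 fun i => (hlo i).trans ((lp.isLUB_norm a).1 (mem_range_self i))))

theorem lp.exists_norm_apply_eq_norm_single {ι : Type*} [DecidableEq ι] {E : ι → Type*}
    [∀ i, NormedAddCommGroup (E i)] (i : ι) (c : E i) :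
    ∃ j, ‖lp.single ∞ i c j‖ = ‖lp.single ∞ i c‖ :=
  ⟨i, by rw [lp.single_apply_self, lp.norm_single ENNReal.zero_lt_top]⟩

theorem natCast_div_add_one_lt_one (n : ℕ) : (n : ℝ) / (n + 1) < 1 :=
  (div_lt_one (by positivity)).2 (lt_add_one _)

theorem isLUB_range_natCast_div_add_one : IsLUB (range fun n : ℕ => (n : ℝ) / (n + 1)) 1 := by
  refine isLUB_of_tendsto_atTop (monotone_nat_of_le_succ fun n => ?_)
    (tendsto_natCast_div_add_atTop 1)
  rw [div_le_div_iff₀ (by positivity) (by positivity)]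
  push_cast
  nlinarith

noncomputable def natDivSucc : ℓ^∞ :=
  ⟨fun n => n / (n + 1), memℓp_infty ⟨1, forall_mem_range.2 fun n => by
    rw [Real.norm_of_nonneg (by positivity)]
    exact (natCast_div_add_one_lt_one n).le⟩⟩

@[simp]
theorem natDivSucc_apply (n : ℕ) : natDivSucc n = n / (n + 1) := rfl

theorem abs_natDivSucc_add_single_apply (c : ℝ) (n : ℕ) :
    |(natDivSucc + lp.single ∞ 0 c : ℓ^∞) n| = if n = 0 then |c| else n / (n + 1) := by
  rcases eq_or_ne n 0 with rfl | hn
  · simp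
  · simp only [if_neg hn, lp.coeFn_add, Pi.add_apply, natDivSucc_apply,
      lp.single_apply_ne _ _ _ hn, add_zero]
    exact abs_of_nonneg (by positivity)

theorem norm_natDivSucc_add_single {c : ℝ} (hc : |c| ≤ 1) :
    ‖natDivSucc + lp.single ∞ 0 c‖ = 1 := by
  refine lp.norm_eq_of_isLUB_of_le isLUB_range_natCast_div_add_one (fun n => ?_) (fun n => ?_)
  all_goals
    rw [Real.norm_eq_abs, abs_natDivSucc_add_single_apply]
    split_ifs with hn
  · simp [hn]
  · rfl
  · exact hc
  · exact (natCast_div_add_one_lt_one n).le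

theorem exists_abs_apply_eq_norm_natDivSucc_add_single_iff {c : ℝ} (hc : |c| ≤ 1) :
    (∃ n, |(natDivSucc + lp.single ∞ 0 c : ℓ^∞) n| = ‖natDivSucc + lp.single ∞ 0 c‖) ↔
      |c| = 1 := by
  simp_rw [norm_natDivSucc_add_single hc, abs_natDivSucc_add_single_apply]
  refine ⟨fun ⟨n, hn⟩ => ?_, fun h => ⟨0, by simpa using h⟩⟩
  split_ifs at hn
  · exact hn
  · exact absurd hn (natCast_div_add_one_lt_one n).ne

theorem SNA_and_complement_not_linear_of_basis_general {M : Type*} [MetricSpace M]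
    (base : M) (f : ℕ → M → ℝ)
    (ha2 : ∀ a : lp (fun _ : ℕ => ℝ) ⊤,
      (∀ x : M, Summable (fun n => a n * f n x)) ∧
      MemLip0 base (fun x => ∑' n, a n * f n x) ∧
      lipNorm (fun x => ∑' n, a n * f n x) = ‖a‖ ∧
      (StronglyAttains (fun x => ∑' n, a n * f n x) ↔ ∃ n₀ : ℕ, |a n₀| = ‖a‖)) :
    (∃ u v : M → ℝ, MemLip0 base u ∧ MemLip0 base v ∧
      StronglyAttains u ∧ StronglyAttains v ∧
      ¬ StronglyAttains (fun x => u x + v x)) ∧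
    (∃ u v : M → ℝ, MemLip0 base u ∧ MemLip0 base v ∧
      ¬ StronglyAttains u ∧ ¬ StronglyAttains v ∧
      StronglyAttains (fun x => u x - v x) ∧ (fun x => u x - v x) ≠ 0) := by
  set t := natDivSucc
  set e : ℝ → ℓ^∞ := lp.single (E := fun _ : ℕ => ℝ) ∞ 0
  have attains_t_add_e {c : ℝ} (hc : |c| ≤ 1) : (∃ n, |(t + e c) n| = ‖t + e c‖) ↔ |c| = 1 :=
    exists_abs_apply_eq_norm_natDivSucc_add_single_iff hc
  have attains_e (c : ℝ) : ∃ n, |e c n| = ‖e c‖ :=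
    lp.exists_norm_apply_eq_norm_single (E := fun _ : ℕ => ℝ) 0 c
  have series_add (a b : ℓ^∞) :
      (fun x => ∑' n, a n * f n x + ∑' n, b n * f n x) = fun x => ∑' n, (a + b) n * f n x :=
    funext fun x => tsum_mul_add_tsum_mul ((ha2 a).1 x) ((ha2 b).1 x)
  have series_sub (a b : ℓ^∞) :
      (fun x => ∑' n, a n * f n x - ∑' n, b n * f n x) = fun x => ∑' n, (a - b) n * f n x :=
    funext fun x => tsum_mul_sub_tsum_mul ((ha2 a).1 x) ((ha2 b).1 x)
  have not_attains_t : ¬ ∃ n, |t n| = ‖t‖ := by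
    simpa [e, t] using (attains_t_add_e (c := 0) (by simp)).not
  constructor
  · refine ⟨_, _, (ha2 (t + e 1)).2.1, (ha2 (e (-1))).2.1,
      (ha2 _).2.2.2.2 ((attains_t_add_e (by simp)).2 (by simp)), (ha2 _).2.2.2.2 (attains_e _), ?_⟩
    rw [series_add, (ha2 _).2.2.2, show t + e 1 + e (-1) = t by simp [e, add_assoc]]
    exact not_attains_t
  · refine ⟨_, _, (ha2 (t + e (1 / 2))).2.1, (ha2 t).2.1, ?_, ?_, ?_, ?_⟩
    · rw [(ha2 _).2.2.2, attains_t_add_e (by norm_num)]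
      norm_num
    · rwa [(ha2 _).2.2.2]
    · rw [series_sub, (ha2 _).2.2.2, add_sub_cancel_left]
      exact attains_e _
    · rw [series_sub, add_sub_cancel_left]
      intro h
      have := (ha2 (e (1 / 2))).2.2.1
      rw [h, lipNorm_zero, lp.norm_single ENNReal.zero_lt_top] at this
      norm_num at this

/-- If `SNA(M)` contains an isometric copy of `c₀` with a disjointly supported basis
`(f_n)` satisfying (a1) and (a2′), then neither `SNA(M)` nor its complement (with `0`)
is a linear subspace of `Lip₀(M)`. -/
theorem SNA_and_complement_not_linear_of_basis {M : Type*} [MetricSpace M] [Infinite M]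
    (base : M) (f : ℕ → M → ℝ) (hf : ∀ n, MemLip0 base (f n))
    (hdisj : ∀ n m, n ≠ m → ∀ x : M, f n x = 0 ∨ f m x = 0)
    (ha2 : ∀ a : lp (fun _ : ℕ => ℝ) ⊤,
      (∀ x : M, Summable (fun n => a n * f n x)) ∧
      MemLip0 base (fun x => ∑' n, a n * f n x) ∧
      lipNorm (fun x => ∑' n, a n * f n x) = ‖a‖ ∧
      (StronglyAttains (fun x => ∑' n, a n * f n x) ↔ ∃ n₀ : ℕ, |a n₀| = ‖a‖)) :
    (∃ u v : M → ℝ, MemLip0 base u ∧ MemLip0 base v ∧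
      StronglyAttains u ∧ StronglyAttains v ∧
      ¬ StronglyAttains (fun x => u x + v x)) ∧
    (∃ u v : M → ℝ, MemLip0 base u ∧ MemLip0 base v ∧
      ¬ StronglyAttains u ∧ ¬ StronglyAttains v ∧
      StronglyAttains (fun x => u x - v x) ∧ (fun x => u x - v x) ≠ 0) :=
  SNA_and_complement_not_linear_of_basis_general base f ha2
end

section
/- For every infinite metric space M with a distinguished base point 0, the set (Lip₀(M) \ SNA(M)) ∪ {0} is not a linear subspace of Lip₀(M): there exist f, g ∈ Lip₀(M), neither of which strongly attains its norm, such that f + g strongly attains its norm and f + g ≠ 0. -/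
open Filter Set
open scoped ZeroAtInfty ENNReal NNReal

/-!
Write `ρ p = infDist p {p}ᶜ`. If `ρ p` is not attained for some `p`, then for `c = 0, 1` the function
`x ↦ c * d(x, p) + d(x, p) / (1 + d(x, p))` has norm `c + 1 / (1 + ρ p)`, approached only as
`d(x, p) ↓ ρ p`, while the difference of the two is `d(·, p)`, which attains its norm.

Otherwise every `x` has a nearest neighbour `Q x`. Any `0 ≤ h ≤ L * ρ` is `L`-Lipschitz, and
`h = W * ρ` with weights `0 ≤ W < 1` tending to `1` along points `x` with `W (Q x) = 0` has
norm `1`, never attained. Two such weights differing by `1/2` at a single point `p` give functions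
whose difference attains its norm at `(p, Q p)`. Such weights exist because a fixed-point-free
self-map of an infinite set moves some infinite subset off itself.
-/

open Metric Function

section LipNorm

variable {M : Type*} [MetricSpace M] {f g : M → ℝ} {L : ℝ}

lemma lipNorm_eq_of_le_of_forall_lt
    (h_le : ∀ x y, |f x - f y| ≤ L * dist x y)
    (h_approx : ∀ L' < L, ∃ x y, L' * dist x y < |f x - f y|) :
    lipNorm f = L := by
  have h_ne {L' : ℝ} {x y : M} (h : L' * dist x y < |f x - f y|) : x ≠ y := by
    rintro rfl
    simp at h
  apply csSup_eq_of_forall_le_of_forall_lt_exists_gt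
  · obtain ⟨x, y, h⟩ := h_approx (L - 1) (by linarith)
    exact ⟨_, x, y, h_ne h, rfl⟩
  · rintro r ⟨x, y, hxy, rfl⟩
    rw [div_le_iff₀ (dist_pos.2 hxy)]
    exact h_le x y
  · intro L' hL'
    obtain ⟨x, y, h⟩ := h_approx L' hL'
    exact ⟨_, ⟨x, y, h_ne h, rfl⟩, (lt_div_iff₀ (dist_pos.2 (h_ne h))).2 h⟩

lemma lipNorm_congr (h : ∀ x y, |g x - g y| = |f x - f y|) : lipNorm g = lipNorm f := by
  simp only [lipNorm, h]

lemma stronglyAttains_congr (h : ∀ x y, |g x - g y| = |f x - f y|) :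
    StronglyAttains g ↔ StronglyAttains f := by
  simp only [StronglyAttains, lipNorm_congr h, h]

lemma stronglyAttains_of_eq (h_le : ∀ x y, |f x - f y| ≤ L * dist x y) {x y : M} (hxy : x ≠ y)
    (h_eq : |f x - f y| = L * dist x y) : StronglyAttains f := by
  have h_approx (L' : ℝ) (hL' : L' < L) : ∃ a b, L' * dist a b < |f a - f b| :=
    ⟨x, y, h_eq ▸ mul_lt_mul_of_pos_right hL' (dist_pos.2 hxy)⟩
  exact ⟨x, y, hxy, by rw [lipNorm_eq_of_le_of_forall_lt h_le h_approx, h_eq]⟩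

def HasUnattainedLipNorm (f : M → ℝ) (L : ℝ) : Prop :=
  (∀ x y, x ≠ y → |f x - f y| < L * dist x y) ∧ ∀ L' < L, ∃ x y, L' * dist x y < |f x - f y|

namespace HasUnattainedLipNorm

lemma abs_sub_le (hf : HasUnattainedLipNorm f L) (x y : M) : |f x - f y| ≤ L * dist x y := by
  rcases eq_or_ne x y with rfl | hxy
  · simp
  · exact (hf.1 x y hxy).le

lemma lipNorm_eq (hf : HasUnattainedLipNorm f L) : lipNorm f = L :=
  lipNorm_eq_of_le_of_forall_lt hf.abs_sub_le hf.2

lemma not_stronglyAttains (hf : HasUnattainedLipNorm f L) : ¬ StronglyAttains f := by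
  rintro ⟨x, y, hxy, h⟩
  rw [hf.lipNorm_eq] at h
  exact (hf.1 x y hxy).ne h

lemma lipschitzWith (hf : HasUnattainedLipNorm f L) : LipschitzWith L.toNNReal f :=
  LipschitzWith.of_dist_le' fun x y => by simpa only [Real.dist_eq] using hf.abs_sub_le x y

lemma congr (hf : HasUnattainedLipNorm f L) (h : ∀ x y, |g x - g y| = |f x - f y|) :
    HasUnattainedLipNorm g L := by
  simpa only [HasUnattainedLipNorm, h] using hf

end HasUnattainedLipNorm

end LipNorm

theorem exists_infinite_forall_apply_notMem {α : Type*} [Infinite α] {Q : α → α}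
    (hQ : ∀ x, Q x ≠ x) : ∃ A : Set α, A.Infinite ∧ ∀ x ∈ A, Q x ∉ A := by
  by_cases h_fibre : ∃ z, (Q ⁻¹' {z}).Infinite
  · obtain ⟨z, hz⟩ := h_fibre
    exact ⟨Q ⁻¹' {z}, hz, fun x hx hQx => hQ (Q x) (hQx.trans hx.symm)⟩
  simp only [not_exists, Set.not_infinite] at h_fibre
  -- Every `y` outside a maximal such set `I` is blocked by it: `Q y ∈ I` or `y ∈ Q '' I`.
  -- As the fibres of `Q` are finite, a finite `I` would leave only finitely many points.
  obtain ⟨I, hI⟩ := zorn_subset {I : Set α | ∀ x ∈ I, Q x ∉ I} fun c hcS hc =>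
    ⟨⋃₀ c, fun x ⟨s, hs, hxs⟩ ⟨t, ht, hQxt⟩ => (hc.total hs ht).elim
      (fun hst => hcS ht x (hst hxs) hQxt) (fun hts => hcS hs x hxs (hts hQxt)),
      fun _ => subset_sUnion_of_mem⟩
  refine ⟨I, fun hfin => infinite_univ (α := α) ?_, hI.prop⟩
  have h_cover : univ ⊆ I ∪ Q '' I ∪ Q ⁻¹' I := by
    intro y _
    by_contra hy
    simp only [mem_union, mem_image, mem_preimage, not_or, not_exists, not_and] at hy
    refine hy.1.1 (hI.mem_of_prop_insert ?_)
    rintro x (rfl | hx) (hQx | hQx)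
    · exact hQ x hQx
    · exact hy.2 hQx
    · exact hy.1.2 x hx hQx
    · exact hI.prop x hx hQx
  exact ((hfin.union (hfin.image Q)).union (hfin.preimage' fun z _ => h_fibre z)).subset h_cover

theorem exists_injective_apply_ne {α : Type*} [Infinite α] {Q : α → α} (hQ : ∀ x, Q x ≠ x) :
    ∃ e : ℕ → α, Injective e ∧ ∀ m n, Q (e m) ≠ e n := by
  obtain ⟨A, hA, hQA⟩ := exists_infinite_forall_apply_notMem hQ
  refine ⟨fun n => hA.natEmbedding A n, Subtype.val_injective.comp (hA.natEmbedding A).injective,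
    fun m n h => hQA _ (hA.natEmbedding A m).2 ?_⟩
  rw [h]
  exact (hA.natEmbedding A n).2

section UnattainedIsolation

variable {M : Type*} [MetricSpace M] {p : M}

lemma infDist_compl_lt_dist_add_dist (hp : ∀ q, q ≠ p → infDist p {p}ᶜ < dist p q) {x y : M}
    (hxy : x ≠ y) : infDist p {p}ᶜ < dist x p + dist y p := by
  rcases eq_or_ne x p with rfl | hx
  · simpa [dist_comm] using hp y hxy.symm
  · linarith [hp x hx, dist_comm x p, dist_nonneg (x := y) (y := p)]

theorem hasUnattainedLipNorm_mul_dist_add_div [Nontrivial M]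
    (hp : ∀ q, q ≠ p → infDist p {p}ᶜ < dist p q) {c : ℝ} (hc : 0 ≤ c) :
    HasUnattainedLipNorm (fun x => c * dist x p + dist x p / (1 + dist x p))
      (c + 1 / (1 + infDist p {p}ᶜ)) := by
  set m := infDist p {p}ᶜ
  have hm : 0 ≤ m := infDist_nonneg
  refine ⟨fun x y hxy => ?_, fun L' hL' => ?_⟩
  · set a := dist x p
    set b := dist y p
    have ha : 0 ≤ a := dist_nonneg
    have hb : 0 ≤ b := dist_nonneg
    have hk : 1 / ((1 + a) * (1 + b)) < 1 / (1 + m) :=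
      one_div_lt_one_div_of_lt (by positivity)
        (by nlinarith [infDist_compl_lt_dist_add_dist hp hxy])
    calc |c * a + a / (1 + a) - (c * b + b / (1 + b))|
        = |a - b| * (c + 1 / ((1 + a) * (1 + b))) := by
          rw [← abs_of_pos (show 0 < c + 1 / ((1 + a) * (1 + b)) by positivity), ← abs_mul]
          congr 1
          field_simp
          ring
      _ ≤ dist x y * (c + 1 / ((1 + a) * (1 + b))) := by
          gcongr
          exact abs_dist_sub_le x y p
      _ < dist x y * (c + 1 / (1 + m)) := by
          gcongr
          exact dist_pos.2 hxy
      _ = (c + 1 / (1 + m)) * dist x y := mul_comm _ _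
  · have h_cont : ContinuousAt (fun t => c + 1 / (1 + t)) m := by
      fun_prop (disch := positivity)
    obtain ⟨u, hmu, hu⟩ :=
      exists_Ico_subset_of_mem_nhds (h_cont.eventually (lt_mem_nhds hL')) ⟨m + 1, by linarith⟩
    obtain ⟨x, hx, hxu⟩ := (infDist_lt_iff (exists_ne p)).1 hmu
    have hr : L' < c + 1 / (1 + dist x p) := by
      rw [dist_comm]
      exact hu ⟨(hp x hx).le, hxu⟩
    refine ⟨x, p, ?_⟩
    simp only [dist_self, mul_zero, zero_div, add_zero, sub_zero]
    rw [abs_of_nonneg (by positivity)]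
    calc L' * dist x p < (c + 1 / (1 + dist x p)) * dist x p :=
          mul_lt_mul_of_pos_right hr (dist_pos.2 hx)
      _ = c * dist x p + dist x p / (1 + dist x p) := by ring

end UnattainedIsolation

theorem exists_sub_stronglyAttains_of_infDist_lt {M : Type*} [MetricSpace M] [Nontrivial M]
    {p : M} (hp : ∀ q, q ≠ p → infDist p {p}ᶜ < dist p q) :
    ∃ f g : M → ℝ, (∃ L, HasUnattainedLipNorm f L) ∧ (∃ L, HasUnattainedLipNorm g L) ∧
      StronglyAttains (f - g) ∧ ∃ x y, (f - g) x ≠ (f - g) y := by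
  obtain ⟨x, hx⟩ := exists_ne p
  have h_sub : (fun x => 1 * dist x p + dist x p / (1 + dist x p)) -
      (fun x => 0 * dist x p + dist x p / (1 + dist x p)) = fun x => dist x p := by
    funext x
    simp
  refine ⟨_, _, ⟨_, hasUnattainedLipNorm_mul_dist_add_div hp zero_le_one⟩,
    ⟨_, hasUnattainedLipNorm_mul_dist_add_div hp le_rfl⟩, ?_, x, p, ?_⟩ <;> rw [h_sub]
  · refine stronglyAttains_of_eq (L := 1) (fun a b => ?_) hx ?_
    · simpa using abs_dist_sub_le a b p
    · simp
  · simpa using hx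

section NearestNeighbour

variable {M : Type*} [MetricSpace M] {f : M → ℝ} {L : ℝ}

lemma abs_sub_le_of_le_mul_infDist (hL : 0 ≤ L) (hf₀ : ∀ y, 0 ≤ f y)
    (hf : ∀ y, f y ≤ L * infDist y {y}ᶜ) (x y : M) : |f x - f y| ≤ L * dist x y := by
  rcases eq_or_ne x y with rfl | hxy
  · simp
  have h_le {a b : M} (hab : a ≠ b) : f a ≤ L * dist a b :=
    (hf a).trans (mul_le_mul_of_nonneg_left (infDist_le_dist_of_mem hab.symm) hL)
  exact abs_sub_le_of_nonneg_of_le (hf₀ x) (h_le hxy) (hf₀ y) (dist_comm x y ▸ h_le hxy.symm)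

theorem HasUnattainedLipNorm.mul_infDist {Q : M → M} (hQne : ∀ x, Q x ≠ x)
    (hQ : ∀ x, dist x (Q x) = infDist x {x}ᶜ) {W : M → ℝ} (hW : ∀ y, 0 ≤ W y ∧ W y < L)
    (h_approx : ∀ L' < L, ∃ x, L' < W x ∧ W (Q x) = 0) :
    HasUnattainedLipNorm (fun y => W y * infDist y {y}ᶜ) L := by
  have hρ_pos (x : M) : 0 < infDist x {x}ᶜ := hQ x ▸ dist_pos.2 (hQne x).symm
  have h_lt {a b : M} (hab : a ≠ b) : W a * infDist a {a}ᶜ < L * dist a b := by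
    have hL : 0 ≤ L := (hW a).1.trans (hW a).2.le
    calc W a * infDist a {a}ᶜ < L * infDist a {a}ᶜ := mul_lt_mul_of_pos_right (hW a).2 (hρ_pos a)
      _ ≤ L * dist a b := mul_le_mul_of_nonneg_left (infDist_le_dist_of_mem hab.symm) hL
  refine ⟨fun x y hxy => abs_sub_lt_of_nonneg_of_lt (mul_nonneg (hW x).1 (hρ_pos x).le)
    (h_lt hxy) (mul_nonneg (hW y).1 (hρ_pos y).le) (dist_comm x y ▸ h_lt hxy.symm),
    fun L' hL' => ?_⟩
  obtain ⟨x, hx, hQx⟩ := h_approx L' hL'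
  refine ⟨x, Q x, ?_⟩
  beta_reduce
  rw [hQx, zero_mul, sub_zero, ← hQ x, abs_of_nonneg (mul_nonneg (hW x).1 dist_nonneg)]
  exact mul_lt_mul_of_pos_right hx (dist_pos.2 (hQne x).symm)

theorem exists_sub_stronglyAttains_of_weight {Q : M → M} (hQne : ∀ x, Q x ≠ x)
    (hQ : ∀ x, dist x (Q x) = infDist x {x}ᶜ) {W : M → ℝ} (hW : ∀ y, 0 ≤ W y ∧ W y < 1) {p : M}
    (hWp : W p = 0) (h_approx : ∀ L' < 1, ∃ x, x ≠ p ∧ Q x ≠ p ∧ L' < W x ∧ W (Q x) = 0) :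
    ∃ f g : M → ℝ, (∃ L, HasUnattainedLipNorm f L) ∧ (∃ L, HasUnattainedLipNorm g L) ∧
      StronglyAttains (f - g) ∧ ∃ x y, (f - g) x ≠ (f - g) y := by
  classical
  obtain ⟨S, hSp, hS_ne⟩ : ∃ S : M → ℝ, S p = 1 / 2 ∧ ∀ y, y ≠ p → S y = 0 :=
    ⟨Pi.single p (1 / 2), Pi.single_eq_same _ _, fun _ hy => Pi.single_eq_of_ne hy _⟩
  have hS (y : M) : 0 ≤ S y ∧ S y ≤ 1 / 2 := by
    by_cases hy : y = p
    · norm_num [hy, hSp]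
    · norm_num [hS_ne y hy]
  have h_sub : (fun y => (W + S) y * infDist y {y}ᶜ) - (fun y => W y * infDist y {y}ᶜ) =
      fun y => S y * infDist y {y}ᶜ := by
    funext y
    simp only [Pi.sub_apply, Pi.add_apply]
    ring
  have h_bump : |S p * infDist p {p}ᶜ - S (Q p) * infDist (Q p) {Q p}ᶜ| = 1 / 2 * dist p (Q p) := by
    rw [← hQ, hSp, hS_ne _ (hQne _), zero_mul, sub_zero, abs_of_nonneg (by positivity)]
  refine ⟨_, _, ⟨1, HasUnattainedLipNorm.mul_infDist (W := W + S) hQne hQ (fun y => ?_)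
    fun L' hL' => ?_⟩, ⟨1, HasUnattainedLipNorm.mul_infDist hQne hQ hW fun L' hL' => ?_⟩, ?_,
    p, Q p, ?_⟩
  · by_cases hy : y = p
    · norm_num [hy, hWp, hSp]
    · simpa [hS_ne y hy] using hW y
  · obtain ⟨x, hxp, hQxp, hLx, hWQx⟩ := h_approx L' hL'
    exact ⟨x, by simpa [hS_ne x hxp] using hLx, by simp [hWQx, hS_ne _ hQxp]⟩
  · obtain ⟨x, -, -, hx⟩ := h_approx L' hL'
    exact ⟨x, hx⟩
  · rw [h_sub]
    exact stronglyAttains_of_eq (abs_sub_le_of_le_mul_infDist (by norm_num)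
      (fun y => mul_nonneg (hS y).1 infDist_nonneg)
      (fun y => mul_le_mul_of_nonneg_right (hS y).2 infDist_nonneg)) (hQne p).symm h_bump
  · rw [h_sub]
    intro h
    rw [show S p * _ = _ from h, sub_self, abs_zero, eq_comm] at h_bump
    exact (mul_pos one_half_pos (dist_pos.2 (hQne p).symm)).ne' h_bump

theorem exists_sub_stronglyAttains_of_nearest [Infinite M] {Q : M → M} (hQne : ∀ x, Q x ≠ x)
    (hQ : ∀ x, dist x (Q x) = infDist x {x}ᶜ) :
    ∃ f g : M → ℝ, (∃ L, HasUnattainedLipNorm f L) ∧ (∃ L, HasUnattainedLipNorm g L) ∧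
      StronglyAttains (f - g) ∧ ∃ x y, (f - g) x ≠ (f - g) y := by
  classical
  obtain ⟨e, he, heQ⟩ := exists_injective_apply_ne hQne
  set W : M → ℝ := extend e (fun n : ℕ => (n : ℝ) / (n + 1)) 0 with hW_def
  have hWe (n : ℕ) : W (e n) = n / (n + 1) := he.extend_apply _ _ _
  refine exists_sub_stronglyAttains_of_weight hQne hQ (W := W) (p := e 0) (fun y => ?_)
    (by simp [hWe]) fun L' hL' => ?_
  · rw [hW_def, extend_def]
    split_ifs
    · exact ⟨by positivity, (div_lt_one (by positivity)).2 (by linarith)⟩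
    · simp
  · obtain ⟨n, hLn, hn⟩ := (((tendsto_natCast_div_add_atTop (1 : ℝ)).eventually
      (lt_mem_nhds hL')).and (eventually_ne_atTop 0)).exists
    exact ⟨e n, he.ne hn, heQ n 0, hWe n ▸ hLn,
      extend_apply' _ _ _ fun ⟨m, hm⟩ => heQ n m hm.symm⟩

end NearestNeighbour

theorem exists_memLip0_of_sub {M : Type*} [MetricSpace M] (base : M) {f g : M → ℝ} {Lf Lg : ℝ}
    (hf : HasUnattainedLipNorm f Lf) (hg : HasUnattainedLipNorm g Lg)
    (hS : StronglyAttains (f - g)) {x y : M} (hxy : (f - g) x ≠ (f - g) y) :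
    ∃ f g : M → ℝ, MemLip0 base f ∧ MemLip0 base g ∧
      ¬ StronglyAttains f ∧ ¬ StronglyAttains g ∧
      StronglyAttains (fun x => f x + g x) ∧ (fun x => f x + g x) ≠ 0 := by
  have hf' := hf.congr (g := fun z => f z - f base) fun a b => by rw [sub_sub_sub_cancel_right]
  have hg' := hg.congr (g := fun z => g base - g z) fun a b => by
    rw [sub_sub_sub_cancel_left, abs_sub_comm]
  refine ⟨_, _, ⟨sub_self _, _, hf'.lipschitzWith⟩, ⟨sub_self _, _, hg'.lipschitzWith⟩,
    hf'.not_stronglyAttains, hg'.not_stronglyAttains, (stronglyAttains_congr fun a b => ?_).2 hS,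
    fun h => hxy ?_⟩
  · simp only [Pi.sub_apply]
    congr 1
    ring
  · have hx := congrFun h x
    have hy := congrFun h y
    simp only [Pi.sub_apply, Pi.zero_apply] at hx hy ⊢
    linarith

/-- For every infinite pointed metric space `M`, the set `(Lip₀(M) \ SNA(M)) ∪ {0}` is not
a linear subspace of `Lip₀(M)`. -/
theorem complement_SNA_not_linear {M : Type*} [MetricSpace M] [Infinite M] (base : M) :
    ∃ f g : M → ℝ, MemLip0 base f ∧ MemLip0 base g ∧
      ¬ StronglyAttains f ∧ ¬ StronglyAttains g ∧
      StronglyAttains (fun x => f x + g x) ∧ (fun x => f x + g x) ≠ 0 := by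
  obtain ⟨f, g, ⟨Lf, hf⟩, ⟨Lg, hg⟩, hS, x, y, hxy⟩ : ∃ f g : M → ℝ,
      (∃ L, HasUnattainedLipNorm f L) ∧ (∃ L, HasUnattainedLipNorm g L) ∧
      StronglyAttains (f - g) ∧ ∃ x y, (f - g) x ≠ (f - g) y := by
    by_cases h : ∃ p : M, ∀ q, q ≠ p → infDist p {p}ᶜ < dist p q
    · obtain ⟨p, hp⟩ := h
      exact exists_sub_stronglyAttains_of_infDist_lt hp
    · simp only [not_exists, not_forall, not_lt] at h
      choose Q hQne hQ using h
      exact exists_sub_stronglyAttains_of_nearest hQne fun x =>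
        (hQ x).antisymm (infDist_le_dist_of_mem (hQne x))
  exact exists_memLip0_of_sub base hf hg hS hxy
end
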